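/- arXiv:1001.5465 — 9 statements merged into one kernel-verified Lean document; each statement's English description precedes it below -/
import Mathlib

section
/- Let n, m be nonempty finite index types and let K : m → Matrix n n ℂ be a family of Kraus operators of an isometry, i.e., Σ_{j∈m} (K j)† (K j) = I. Suppose that for every unitary matrix V ∈ Matrix.unitaryGroup m ℂ and every k ∈ m there exists a real number p such that for every vector r : n → ℂ with Σ_i |r i|² = 1 one has Σ_i |((Σ_{j∈m} (V k j) • K j).mulVec r) i|² = p (i.e., the outcome probabilities of any measurement on the ancilla in any orthonormal basis are independent of the normalized input state r). Then there exist a unitary matrix U ∈ Matrix.unitaryGroup n ℂ and scalars c : m → ℂ such that K j = (c j) • U for every j ∈ m. -/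
/-!
If `‖M r‖²` is the same for all unit vectors `r`, then `Mᴴ * M` is a scalar matrix, by
homogeneity and polarization. Applied to `M = ∑ j, V k j • K j`, with `V = 1` this makes every
`(K j)ᴴ * K j` scalar, and with `V` a Givens rotation in the plane of `j` and `l` it makes the
mixed products `(K j)ᴴ * K l` scalar as well. Normalising some nonzero `K j₀` to a unitary `U`,
every `Uᴴ * K j` is scalar, i.e. `K j ∈ ℂ • U`.
-/

open Matrix Complex

theorem norm_sq_map_eq_mul_norm_sq {𝕜 E F : Type*} [RCLike 𝕜]
    [NormedAddCommGroup E] [NormedSpace 𝕜 E] [NormedAddCommGroup F] [NormedSpace 𝕜 F]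
    (f : E →ₗ[𝕜] F) {p : ℝ}
    (h : ∀ x, ‖x‖ = 1 → ‖f x‖ ^ 2 = p) (x : E) : ‖f x‖ ^ 2 = p * ‖x‖ ^ 2 := by
  rcases eq_or_ne x 0 with rfl | hx
  · simp
  have hx' : (‖x‖ : 𝕜) ≠ 0 := by simpa using hx
  calc ‖f x‖ ^ 2 = ‖f ((‖x‖ : 𝕜) • ((‖x‖ : 𝕜)⁻¹ • x))‖ ^ 2 := by
        rw [smul_inv_smul₀ hx']
    _ = p * ‖x‖ ^ 2 := by
      rw [map_smul, norm_smul, mul_pow, h _ (norm_smul_inv_norm hx), mul_comm]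
      simp

theorem conjTranspose_smul_add_smul_mul_self {n R : Type*} [Fintype n] [CommRing R] [StarRing R]
    (a b : R) (A B : Matrix n n R) :
    (a • A + b • B)ᴴ * (a • A + b • B)
      = (star a * a) • (Aᴴ * A) + (star a * b) • (Aᴴ * B) + (star b * a) • (Aᴴ * B)ᴴ
        + (star b * b) • (Bᴴ * B) := by
  simp only [conjTranspose_add, conjTranspose_smul, conjTranspose_mul,
    conjTranspose_conjTranspose, add_mul, mul_add, smul_mul_assoc, mul_smul_comm]
  module

section Givens

variable {m : Type*} [Fintype m] [DecidableEq m]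

def givens (j l : m) (a b : ℂ) : Matrix m m ℂ := fun x =>
  if x = j then a • Pi.single j 1 + b • Pi.single l 1
  else if x = l then (-star b) • Pi.single j 1 + star a • Pi.single l 1
  else Pi.single x 1

theorem givens_mem_unitaryGroup {j l : m} (hjl : j ≠ l) {a b : ℂ}
    (hab : star a * a + star b * b = 1) : givens j l a b ∈ unitaryGroup m ℂ := by
  rw [mem_unitaryGroup_iff]
  ext x y
  change givens j l a b x ⬝ᵥ star (givens j l a b y) = _
  have trich : ∀ z, z = j ∨ z = l ∨ (z ≠ j ∧ j ≠ z ∧ z ≠ l ∧ l ≠ z) := by tauto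
  rw [Complex.star_def] at hab
  rcases trich x with rfl | rfl | ⟨hxj, hjx, hxl, hlx⟩ <;>
    rcases trich y with rfl | rfl | ⟨hyj, hjy, hyl, hly⟩ <;>
    simp [givens, hjl.symm, one_eq_pi_single, dotProduct_add, *] <;>
    grind

theorem sum_givens_apply_smul {M : Type*} [AddCommMonoid M] [Module ℂ M] (j l : m) (a b : ℂ)
    (K : m → M) : ∑ t, givens j l a b j t • K t = a • K j + b • K l := by
  simp [givens, add_smul, Finset.sum_add_distrib, Pi.single_apply, ite_smul]

end Givens

section Scalar

variable {n : Type*} [Fintype n] [DecidableEq n]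

theorem conjTranspose_mul_self_eq_smul_one_of_norm_sq {A : Matrix n n ℂ} {p : ℝ}
    (h : ∀ r : n → ℂ, ∑ i, ‖r i‖ ^ 2 = 1 → ∑ i, ‖(A *ᵥ r) i‖ ^ 2 = p) :
    Aᴴ * A = (p : ℂ) • 1 := by
  set T := toEuclideanLin A
  have hT : ∀ x, ‖T x‖ ^ 2 = p * ‖x‖ ^ 2 := norm_sq_map_eq_mul_norm_sq T fun x hx => by
    simpa [T, EuclideanSpace.norm_sq_eq] using
      h x.ofLp (by rw [← EuclideanSpace.norm_sq_eq, hx, one_pow])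
  apply toEuclideanLin.injective
  rw [← ext_inner_map]
  intro x
  have hTT : toEuclideanLin (Aᴴ * A) x = T.adjoint (T x) := by
    rw [← toEuclideanLin_conjTranspose_eq_adjoint]
    simp [T, toLpLin_apply, mulVec_mulVec]
  rw [hTT, LinearMap.adjoint_inner_left, inner_self_eq_norm_sq_to_K, ← RCLike.ofReal_pow, hT,
    map_smul, LinearMap.smul_apply, inner_smul_left]
  simp [inner_self_eq_norm_sq_to_K]

theorem conjTranspose_mul_mem_span_one {m : Type*} [Fintype m] [DecidableEq m]
    {K : m → Matrix n n ℂ}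
    (h : ∀ V ∈ unitaryGroup m ℂ, ∀ k,
      (∑ j, V k j • K j)ᴴ * (∑ j, V k j • K j) ∈ ℂ ∙ (1 : Matrix n n ℂ))
    (j l : m) : (K j)ᴴ * K l ∈ ℂ ∙ (1 : Matrix n n ℂ) := by
  set S := ℂ ∙ (1 : Matrix n n ℂ)
  have hdiag : ∀ k, (K k)ᴴ * K k ∈ S := fun k => by
    simpa [one_apply, ite_smul] using h 1 (one_mem _) k
  rcases eq_or_ne j l with rfl | hjl
  · exact hdiag j
  set X := (K j)ᴴ * K l
  have hmix : ∀ a b : ℂ, star a * a + star b * b = 1 →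
      (star a * b) • X + (star b * a) • Xᴴ ∈ S := by
    intro a b hab
    have hV := h _ (givens_mem_unitaryGroup hjl hab) j
    rw [sum_givens_apply_smul, conjTranspose_smul_add_smul_mul_self] at hV
    convert S.sub_mem hV (S.add_mem (S.smul_mem (star a * a) (hdiag j))
      (S.smul_mem (star b * b) (hdiag l))) using 1
    module
  -- The Pythagorean triple (3, 4, 5) provides unit vectors without square roots.
  have hre : X + Xᴴ ∈ S := by
    have h := hmix (3 / 5) (4 / 5) (by norm_num)
    rwa [show (star (3 / 5 : ℂ) * (4 / 5)) • X + (star (4 / 5 : ℂ) * (3 / 5)) • Xᴴ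
        = (12 / 25 : ℂ) • (X + Xᴴ) by simp only [star_div₀, star_ofNat]; module,
      S.smul_mem_iff (by norm_num)] at h
  have him : I • (X - Xᴴ) ∈ S := by
    have h := hmix (3 / 5) (4 / 5 * I) (by
      simp only [Complex.star_def, map_mul, map_div₀, map_ofNat, conj_I]
      linear_combination (-16 / 25 : ℂ) * I_sq)
    rwa [show (star (3 / 5 : ℂ) * (4 / 5 * I)) • X + (star (4 / 5 * I) * (3 / 5)) • Xᴴ
        = (12 / 25 : ℂ) • I • (X - Xᴴ) by
          simp only [Complex.star_def, map_mul, map_div₀, map_ofNat, conj_I]; module,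
      S.smul_mem_iff (by norm_num)] at h
  have hX : X = (1 / 2 : ℂ) • (X + Xᴴ) - (I / 2) • I • (X - Xᴴ) := by
    linear_combination (norm := module) (1 / 2 : ℂ) • (I_sq • (X - Xᴴ))
  rw [hX]
  exact S.sub_mem (S.smul_mem _ hre) (S.smul_mem _ him)

theorem smul_mem_unitaryGroup_of_conjTranspose_mul_self {K : Matrix n n ℂ} {p : ℝ}
    (hp : 0 < p) (h : Kᴴ * K = (p : ℂ) • 1) : (√p : ℂ)⁻¹ • K ∈ unitaryGroup n ℂ := by
  have hsq : (√p : ℂ)⁻¹ * (√p : ℂ)⁻¹ * p = 1 := by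
    rw [← mul_inv, ← ofReal_mul, Real.mul_self_sqrt hp.le,
      inv_mul_cancel₀ (by exact_mod_cast hp.ne')]
  rw [mem_unitaryGroup_iff', star_eq_conjTranspose, conjTranspose_smul, smul_mul_smul_comm, h,
    smul_smul, star_inv₀, Complex.star_def, conj_ofReal, hsq, one_smul]

theorem exists_eq_smul_of_conjTranspose_mul_mem_span_one {R : Type*} [CommRing R]
    [StarRing R] {U K : Matrix n n R} (hU : U ∈ unitaryGroup n R)
    (h : Uᴴ * K ∈ R ∙ (1 : Matrix n n R)) : ∃ c : R, K = c • U := by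
  obtain ⟨c, hc⟩ := Submodule.mem_span_singleton.mp h
  refine ⟨c, ?_⟩
  calc K = U * (Uᴴ * K) := by
        rw [← mul_assoc, ← star_eq_conjTranspose, mem_unitaryGroup_iff.mp hU, one_mul]
    _ = c • U := by rw [← hc, mul_smul_comm, mul_one]

end Scalar

theorem stmt_1_general {n m : Type*} [Fintype n] [DecidableEq n] [Nonempty n]
    [Fintype m] [DecidableEq m]
    (K : m → Matrix n n ℂ)
    (hiso : ∑ j, (K j)ᴴ * K j = (1 : Matrix n n ℂ))
    (hinfo : ∀ V ∈ Matrix.unitaryGroup m ℂ, ∀ k : m, ∃ p : ℝ,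
      ∀ r : n → ℂ, (∑ i, ‖r i‖ ^ 2 = 1) →
        ∑ i, ‖((∑ j, V k j • K j).mulVec r) i‖ ^ 2 = p) :
    ∃ U ∈ Matrix.unitaryGroup n ℂ, ∃ c : m → ℂ, ∀ j, K j = c j • U := by
  have hgram : ∀ V ∈ unitaryGroup m ℂ, ∀ k, ∃ p : ℝ, 0 ≤ p ∧
      (∑ j, V k j • K j)ᴴ * (∑ j, V k j • K j) = (p : ℂ) • 1 := by
    intro V hV k
    obtain ⟨p, hp⟩ := hinfo V hV k
    obtain ⟨i⟩ := ‹Nonempty n›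
    refine ⟨p, ?_, conjTranspose_mul_self_eq_smul_one_of_norm_sq hp⟩
    rw [← hp (Pi.single i 1) (by simp [Pi.single_apply, apply_ite (‖·‖ ^ 2)])]
    positivity
  have hcross := conjTranspose_mul_mem_span_one (K := K) fun V hV k => by
    obtain ⟨p, -, hp⟩ := hgram V hV k
    exact hp ▸ Submodule.smul_mem _ _ (Submodule.mem_span_singleton_self 1)
  have hdiag : ∀ j, ∃ p : ℝ, 0 ≤ p ∧ (K j)ᴴ * K j = (p : ℂ) • 1 := fun j => by
    simpa [one_apply, ite_smul] using hgram 1 (one_mem _) j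
  choose p hp0 hp using hdiag
  obtain ⟨j₀, hj₀⟩ : ∃ j, 0 < p j := by
    by_contra! h
    have : ∑ j, (K j)ᴴ * K j = 0 := by simp [hp, le_antisymm (h _) (hp0 _)]
    exact one_ne_zero (hiso.symm.trans this)
  have hU := smul_mem_unitaryGroup_of_conjTranspose_mul_self hj₀ (hp j₀)
  choose c hc using fun j => exists_eq_smul_of_conjTranspose_mul_mem_span_one hU (by
    rw [conjTranspose_smul, smul_mul_assoc]
    exact Submodule.smul_mem _ _ (hcross j₀ j))
  exact ⟨_, hU, c, hc⟩

theorem stmt_1 {n m : Type*} [Fintype n] [DecidableEq n] [Nonempty n]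
    [Fintype m] [DecidableEq m] [Nonempty m]
    (K : m → Matrix n n ℂ)
    (hiso : ∑ j, (K j)ᴴ * K j = (1 : Matrix n n ℂ))
    (hinfo : ∀ V ∈ Matrix.unitaryGroup m ℂ, ∀ k : m, ∃ p : ℝ,
      ∀ r : n → ℂ, (∑ i, ‖r i‖ ^ 2 = 1) →
        ∑ i, ‖((∑ j, V k j • K j).mulVec r) i‖ ^ 2 = p) :
    ∃ U ∈ Matrix.unitaryGroup n ℂ, ∃ c : m → ℂ, ∀ j, K j = c j • U :=
  stmt_1_general K hiso hinfo
end

section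
/- Let G be a finite group, μ : G → G → ℂ a factor system (|μ(f,g)| = 1 for all f,g; μ(e,f) = μ(f,e) = 1; and μ(h,f)μ(hf,g) = μ(h,fg)μ(f,g) for all f,g,h), let A be a nonempty finite index type, and let U : G → Matrix A A ℂ be a projective unitary representation of G with factor system μ, i.e., each U(f) is unitary, U(e) = I, and U(f)·U(g) = μ(f,g) • U(fg) for all f,g ∈ G. Let B be a nonempty finite index type and W : G → Matrix B B ℂ a family of matrices satisfying, for every g ∈ G, Σ_{f∈G} conj(μ(f,g)) • ((W f)† · W(fg)) = (if g = e then I else 0). Then 𝒰 := Σ_{f∈G} (U f) ⊗ (W f) is a unitary matrix on ℂ^(A×B). -/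
/-!
Expanding the product, `𝒰ᴴ 𝒰 = ∑_{f,g} (U f)ᴴ U g ⊗ (W f)ᴴ W g`. Substituting `g = f h`, the
projective relation together with unitarity gives `(U f)ᴴ U (f h) = conj μ(f,h) • U h`, so
`𝒰ᴴ 𝒰 = ∑_h U h ⊗ ∑_f conj μ(f,h) • (W f)ᴴ W (f h)`, and the hypothesis on `W` kills every
term except `U 1 ⊗ 1 = 1`. For square matrices a one-sided inverse suffices.
-/

open Matrix Kronecker

theorem Matrix.kronecker_sum {ι l m n p R : Type*} [CommSemiring R] (s : Finset ι)
    (x : Matrix l m R) (y : ι → Matrix n p R) :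
    x ⊗ₖ (∑ i ∈ s, y i) = ∑ i ∈ s, x ⊗ₖ y i :=
  map_sum (kroneckerBilinear (R := R) x) y s

theorem Matrix.conjTranspose_mul_eq_smul_of_mul_eq_smul {n 𝕜 : Type*} [Fintype n] [DecidableEq n]
    [CommRing 𝕜] [StarRing 𝕜] {P Q R : Matrix n n 𝕜} {c : 𝕜}
    (hP : P ∈ unitaryGroup n 𝕜) (hc : star c * c = 1) (h : P * Q = c • R) :
    Pᴴ * R = star c • Q := by
  calc Pᴴ * R = (star c * c) • (Pᴴ * R) := by rw [hc, one_smul]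
    _ = star c • (Pᴴ * (P * Q)) := by rw [h, mul_smul, Matrix.mul_smul]
    _ = star c • Q := by
      rw [← mul_assoc, ← star_eq_conjTranspose, mem_unitaryGroup_iff'.mp hP, one_mul]

theorem Matrix.conjTranspose_sum_kronecker_mul_sum_kronecker {G l m n p R : Type*} [Group G]
    [Fintype G] [Fintype l] [Fintype n] [CommSemiring R] [StarRing R]
    (U : G → Matrix l m R) (W : G → Matrix n p R) :
    (∑ f, U f ⊗ₖ W f)ᴴ * (∑ g, U g ⊗ₖ W g)
      = ∑ h, ∑ f, ((U f)ᴴ * U (f * h)) ⊗ₖ ((W f)ᴴ * W (f * h)) := by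
  simp_rw [conjTranspose_sum, Matrix.sum_mul, Matrix.mul_sum, conjTranspose_kronecker,
    ← mul_kronecker_mul]
  conv_rhs => rw [Finset.sum_comm]
  refine Finset.sum_congr rfl fun f _ => ?_
  exact (Fintype.sum_equiv (Equiv.mulLeft f)
    (fun h => ((U f)ᴴ * U (f * h)) ⊗ₖ ((W f)ᴴ * W (f * h)))
    (fun g => ((U f)ᴴ * U g) ⊗ₖ ((W f)ᴴ * W g)) fun h => rfl).symm

theorem Complex.star_mul_self_of_norm_eq_one {z : ℂ} (hz : ‖z‖ = 1) : star z * z = 1 := by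
  rw [Complex.star_def, Complex.conj_mul', hz, Complex.ofReal_one, one_pow]

theorem stmt_4_general {G : Type*} [Group G] [Fintype G] [DecidableEq G]
    (μ : G → G → ℂ)
    (hμabs : ∀ f g : G, ‖μ f g‖ = 1)
    {A : Type*} [Fintype A] [DecidableEq A]
    (U : G → Matrix A A ℂ)
    (hUu : ∀ f : G, U f ∈ Matrix.unitaryGroup A ℂ)
    (hUe : U 1 = 1)
    (hUm : ∀ f g : G, U f * U g = μ f g • U (f * g))
    {B : Type*} [Fintype B] [DecidableEq B]
    (W : G → Matrix B B ℂ)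
    (hW : ∀ g : G, ∑ f : G, star (μ f g) • ((W f)ᴴ * W (f * g))
        = if g = 1 then (1 : Matrix B B ℂ) else 0) :
    (∑ f : G, (U f) ⊗ₖ (W f)) ∈ Matrix.unitaryGroup (A × B) ℂ := by
  have hU : ∀ f h, (U f)ᴴ * U (f * h) = star (μ f h) • U h := fun f h =>
    conjTranspose_mul_eq_smul_of_mul_eq_smul (hUu f)
      (Complex.star_mul_self_of_norm_eq_one (hμabs f h)) (hUm f h)
  rw [mem_unitaryGroup_iff', star_eq_conjTranspose, conjTranspose_sum_kronecker_mul_sum_kronecker]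
  calc ∑ h, ∑ f, ((U f)ᴴ * U (f * h)) ⊗ₖ ((W f)ᴴ * W (f * h))
      = ∑ h, U h ⊗ₖ ∑ f, star (μ f h) • ((W f)ᴴ * W (f * h)) := by
        simp_rw [hU, smul_kronecker, ← kronecker_smul, kronecker_sum]
    _ = ∑ h, U h ⊗ₖ (if h = 1 then (1 : Matrix B B ℂ) else 0) := by simp_rw [hW]
    _ = 1 := by simp [apply_ite, hUe]

theorem stmt_4 {G : Type*} [Group G] [Fintype G] [DecidableEq G]
    (μ : G → G → ℂ)
    (hμabs : ∀ f g : G, ‖μ f g‖ = 1)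
    (hμel : ∀ f : G, μ 1 f = 1) (hμer : ∀ f : G, μ f 1 = 1)
    (hμc : ∀ f g h : G, μ h f * μ (h * f) g = μ h (f * g) * μ f g)
    {A : Type*} [Fintype A] [DecidableEq A] [Nonempty A]
    (U : G → Matrix A A ℂ)
    (hUu : ∀ f : G, U f ∈ Matrix.unitaryGroup A ℂ)
    (hUe : U 1 = 1)
    (hUm : ∀ f g : G, U f * U g = μ f g • U (f * g))
    {B : Type*} [Fintype B] [DecidableEq B] [Nonempty B]
    (W : G → Matrix B B ℂ)
    (hW : ∀ g : G, ∑ f : G, star (μ f g) • ((W f)ᴴ * W (f * g))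
        = if g = 1 then (1 : Matrix B B ℂ) else 0) :
    (∑ f : G, (U f) ⊗ₖ (W f)) ∈ Matrix.unitaryGroup (A × B) ℂ :=
  stmt_4_general μ hμabs U hUu hUe hUm W hW
end

section
/- Let G be a finite group, μ : G → G → ℂ a factor system (|μ(f,g)| = 1 for all f,g; μ(e,f) = μ(f,e) = 1; and μ(h,f)μ(hf,g) = μ(h,fg)μ(f,g) for all f,g,h), A a nonempty finite index type, and U : G → Matrix A A ℂ a projective unitary representation of G with factor system μ. Let B be a nonempty finite index type and W : G → Matrix B B ℂ. Suppose that the family (U f)_{f∈G} is linearly independent in the ℂ-vector space of A × A matrices, and that 𝒰 := Σ_{f∈G} (U f) ⊗ (W f) is unitary. Then for every g ∈ G, Σ_{f∈G} conj(μ(f,g)) • ((W f)† · W(fg)) = (if g = e then I else 0). -/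
/-!
Expand `𝒰ᴴ 𝒰 = 1`. Substituting `f' = f h` in the double sum and using
`(U f)ᴴ U(f h) = conj (μ(f,h)) U(h)` collects it as `∑ₕ U(h) ⊗ Mₕ`, where `Mₕ` is the left-hand side
of the orthogonality relation at `h`. Comparing with `1 = U(e) ⊗ I` and using that the `U(h)` are
linearly independent, which makes `(Mₕ)ₕ ↦ ∑ₕ U(h) ⊗ Mₕ` injective, gives `Mₕ = δ_{h,e} I`.
-/

open Matrix Kronecker

namespace Matrix

variable {R I l m n p : Type*}

theorem kronecker_sum_s5 [NonUnitalNonAssocSemiring R] [Fintype I] (x : Matrix l m R)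
    (y : I → Matrix n p R) : x ⊗ₖ (∑ i, y i) = ∑ i, x ⊗ₖ y i := by
  ext
  simp [kroneckerMap_apply, sum_apply, Finset.mul_sum]

theorem conjTranspose_mul_eq_star_smul [CommRing R] [StarRing R] [Fintype m] [DecidableEq m]
    {x y z : Matrix m m R} {c : R} (hx : x ∈ unitaryGroup m R) (hc : star c * c = 1)
    (h : x * y = c • z) : xᴴ * z = star c • y := by
  have hz : z = star c • (x * y) := by rw [h, smul_smul, hc, one_smul]
  rw [hz, Matrix.mul_smul, ← mul_assoc, ← star_eq_conjTranspose, hx.1, one_mul]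

end Matrix

theorem LinearIndependent.eq_of_sum_kronecker_eq {R I l m n p : Type*} [CommRing R] [Fintype I]
    {x : I → Matrix l m R} (hx : LinearIndependent R x) {y z : I → Matrix n p R}
    (h : ∑ i, x i ⊗ₖ y i = ∑ i, x i ⊗ₖ z i) : y = z := by
  funext i
  ext b b'
  have hcoeff := Fintype.linearIndependent_iff.mp hx (fun i => y i b b' - z i b b') ?_ i
  · exact sub_eq_zero.mp hcoeff
  ext a a'
  have hentry := congrFun (congrFun h (a, b)) (a', b')
  simp only [Matrix.sum_apply, kroneckerMap_apply] at hentry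
  simp only [Matrix.sum_apply, Matrix.smul_apply, Matrix.zero_apply, smul_eq_mul, sub_mul,
    Finset.sum_sub_distrib, sub_eq_zero]
  simpa only [mul_comm] using hentry

section TwistedGram

variable {G R B : Type*} [Group G] [Fintype G]

def twistedGram [CommRing R] [StarRing R] [Fintype B] (μ : G → G → R) (W : G → Matrix B B R)
    (g : G) : Matrix B B R :=
  ∑ f, star (μ f g) • ((W f)ᴴ * W (f * g))

theorem conjTranspose_mul_sum_kronecker [CommRing R] [StarRing R] [Fintype B] {A : Type*}
    [Fintype A] {μ : G → G → R} {U : G → Matrix A A R} (W : G → Matrix B B R)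
    (hU : ∀ f h, (U f)ᴴ * U (f * h) = star (μ f h) • U h) :
    (∑ f, U f ⊗ₖ W f)ᴴ * ∑ f, U f ⊗ₖ W f = ∑ h, U h ⊗ₖ twistedGram μ W h := by
  calc (∑ f, U f ⊗ₖ W f)ᴴ * ∑ f, U f ⊗ₖ W f
      = ∑ f, ∑ h, (U f ⊗ₖ W f)ᴴ * (U (f * h) ⊗ₖ W (f * h)) := by
        rw [conjTranspose_sum, Finset.sum_mul_sum]
        refine Finset.sum_congr rfl fun f _ => ?_
        exact (Fintype.sum_equiv (Equiv.mulLeft f) _ _ fun _ => rfl).symm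
    _ = ∑ f, ∑ h, U h ⊗ₖ (star (μ f h) • ((W f)ᴴ * W (f * h))) := by
        simp only [conjTranspose_kronecker, ← mul_kronecker_mul, hU, smul_kronecker,
          kronecker_smul]
    _ = ∑ h, U h ⊗ₖ twistedGram μ W h := by
        rw [Finset.sum_comm]
        simp only [twistedGram, kronecker_sum_s5]

end TwistedGram

theorem stmt_5_general {G : Type*} [Group G] [Fintype G] [DecidableEq G]
    (μ : G → G → ℂ)
    (hμabs : ∀ f g : G, ‖μ f g‖ = 1)
    {A : Type*} [Fintype A] [DecidableEq A]
    (U : G → Matrix A A ℂ)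
    (hUu : ∀ f : G, U f ∈ Matrix.unitaryGroup A ℂ)
    (hUe : U 1 = 1)
    (hUm : ∀ f g : G, U f * U g = μ f g • U (f * g))
    (hUli : LinearIndependent ℂ U)
    {B : Type*} [Fintype B] [DecidableEq B]
    (W : G → Matrix B B ℂ)
    (h𝒰 : (∑ f : G, (U f) ⊗ₖ (W f)) ∈ Matrix.unitaryGroup (A × B) ℂ) :
    ∀ g : G, ∑ f : G, star (μ f g) • ((W f)ᴴ * W (f * g))
      = if g = 1 then (1 : Matrix B B ℂ) else 0 := by
  have hU : ∀ f h, (U f)ᴴ * U (f * h) = star (μ f h) • U h := fun f h =>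
    conjTranspose_mul_eq_star_smul (hUu f)
      ((Complex.conj_mul' _).trans (by rw [hμabs]; norm_num)) (hUm f h)
  have hgram : ∑ h, U h ⊗ₖ twistedGram μ W h
      = ∑ h, U h ⊗ₖ (if h = 1 then (1 : Matrix B B ℂ) else 0) := by
    rw [← conjTranspose_mul_sum_kronecker W hU, ← star_eq_conjTranspose, h𝒰.1,
      Fintype.sum_eq_single 1 fun h hh => by simp [hh], if_pos rfl, hUe, one_kronecker_one]
  exact congrFun (hUli.eq_of_sum_kronecker_eq hgram)

theorem stmt_5 {G : Type*} [Group G] [Fintype G] [DecidableEq G]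
    (μ : G → G → ℂ)
    (hμabs : ∀ f g : G, ‖μ f g‖ = 1)
    (hμel : ∀ f : G, μ 1 f = 1) (hμer : ∀ f : G, μ f 1 = 1)
    (hμc : ∀ f g h : G, μ h f * μ (h * f) g = μ h (f * g) * μ f g)
    {A : Type*} [Fintype A] [DecidableEq A] [Nonempty A]
    (U : G → Matrix A A ℂ)
    (hUu : ∀ f : G, U f ∈ Matrix.unitaryGroup A ℂ)
    (hUe : U 1 = 1)
    (hUm : ∀ f g : G, U f * U g = μ f g • U (f * g))
    (hUli : LinearIndependent ℂ U)
    {B : Type*} [Fintype B] [DecidableEq B] [Nonempty B]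
    (W : G → Matrix B B ℂ)
    (h𝒰 : (∑ f : G, (U f) ⊗ₖ (W f)) ∈ Matrix.unitaryGroup (A × B) ℂ) :
    ∀ g : G, ∑ f : G, star (μ f g) • ((W f)ᴴ * W (f * g))
      = if g = 1 then (1 : Matrix B B ℂ) else 0 :=
  stmt_5_general μ hμabs U hUu hUe hUm hUli W h𝒰
end

section
/- Let G be a finite group, μ : G → G → ℂ a factor system (|μ(f,g)| = 1 for all f,g; μ(e,f) = μ(f,e) = 1; and μ(h,f)μ(hf,g) = μ(h,fg)μ(f,g) for all f,g,h), A a nonempty finite index type, and U : G → Matrix A A ℂ a projective unitary representation of G with factor system μ. Let B be a nonempty finite index type and W : G → Matrix B B ℂ be such that 𝒰 := Σ_{f∈G} (U f) ⊗ (W f) is unitary. Then there exists a family W' : G → Matrix B B ℂ such that Σ_{f∈G} (U f) ⊗ (W' f) = 𝒰 and, for every g ∈ G, Σ_{f∈G} conj(μ(f,g)) • ((W' f)† · W'(fg)) = (if g = e then I else 0). -/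
/-!
Encode `W` as the `B × B` matrix `w` over the twisted group algebra `ℂ^μ[G]` whose `(c, b)` entry
is `f ↦ W f c b`. Then `𝒰` is the entrywise image of `w` under the *-homomorphism
`φ : ℂ^μ[G] → M_A(ℂ)`, `x ↦ ∑ g, x g • U g`, and condition (41) says `w* w = 1` in `M_B(ℂ^μ[G])`,
while unitarity of `𝒰` only gives `φ (w* w) = 1`.

The ℓ² inner product on `ℂ^μ[G]` is the trace form `τ (x* y)`, `τ x = x 1`, so the orthogonal
complement of the two-sided ideal `K = ker φ` is again a two-sided ideal. Splitting
`1 = (1 - r) + r` along `K ⊕ Kᗮ` gives a central self-adjoint idempotent `r` with `φ r = 1` and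
`r K = 0`. Then `w' = r w + (1 - r)` has the same image under `φ`, and
`w'* w' = r w* w + (1 - r) = 1`.
-/

open Matrix Kronecker

namespace TwoSidedIdeal

variable {R : Type*} [Ring R] {K : TwoSidedIdeal R} {r : R}

lemma commute_of_one_sub_mem (h1 : 1 - r ∈ K) (hK : ∀ k ∈ K, r * k = 0 ∧ k * r = 0) (x : R) :
    Commute r x := by
  have hl := (hK _ (K.mul_mem_left x _ h1)).1
  have hr := (hK _ (K.mul_mem_right _ x h1)).2
  rw [mul_sub, mul_one, mul_sub, ← mul_assoc, sub_eq_zero] at hl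
  rw [sub_mul, one_mul, sub_mul, sub_eq_zero] at hr
  exact hl.trans hr.symm

lemma isStarProjection_of_one_sub_mem [StarRing R] (hstar : ∀ k ∈ K, star k ∈ K)
    (h1 : 1 - r ∈ K) (hK : ∀ k ∈ K, r * k = 0 ∧ k * r = 0) : IsStarProjection r := by
  have hidem := (hK _ h1).1
  have hself := (hK _ (hstar _ h1)).1
  rw [mul_sub, mul_one, sub_eq_zero] at hidem
  rw [star_sub, star_one, mul_sub, mul_one, sub_eq_zero] at hself
  refine ⟨hidem.symm, ?_⟩
  rw [IsSelfAdjoint, hself, star_mul, star_star, ← hself]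

end TwoSidedIdeal

lemma IsStarProjection.star_mul_self_add_one_sub_eq_one {S : Type*} [Ring S] [StarRing S]
    {p w : S} (hp : IsStarProjection p) (hpc : ∀ x, Commute p x) (hw : p * (star w * w) = p) :
    star (p * w + (1 - p)) * (p * w + (1 - p)) = 1 := by
  have hwp : p * star w * (p * w) = p * (star w * w) := by
    rw [mul_assoc, (hpc (star w)).symm.left_comm, ← mul_assoc, hp.isIdempotentElem.eq]
  have hw1 : p * star w * (1 - p) = 0 := by
    rw [(hpc _).eq, mul_assoc, hp.mul_one_sub_self, mul_zero]
  rw [star_add, star_sub, star_one, star_mul, hp.isSelfAdjoint.star_eq, ← (hpc (star w)).eq]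
  calc (p * star w + (1 - p)) * (p * w + (1 - p))
      = p * star w * (p * w) + p * star w * (1 - p) + (1 - p) * p * w + (1 - p) * (1 - p) := by
        noncomm_ring
    _ = 1 := by
        rw [hwp, hw1, hp.one_sub_mul_self, hp.one_sub.isIdempotentElem.eq, hw]
        noncomm_ring

namespace Matrix

variable {A B : Type*} [Fintype A] [Fintype B]

variable (A B) in
def compCommRingEquiv : Matrix B B (Matrix A A ℂ) ≃+* Matrix (A × B) (A × B) ℂ :=
  (compRingEquiv B A ℂ).trans (reindexRingEquiv ℂ (Equiv.prodComm B A))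

lemma compCommRingEquiv_apply (M : Matrix B B (Matrix A A ℂ)) (a a' : A) (b b' : B) :
    compCommRingEquiv A B M (a, b) (a', b') = M b b' a a' := rfl

lemma compCommRingEquiv_star (M : Matrix B B (Matrix A A ℂ)) :
    compCommRingEquiv A B (star M) = star (compCommRingEquiv A B M) := rfl

variable [DecidableEq B] {R : Type*} [Ring R] {r : R}

lemma isStarProjection_scalar [StarRing R] (hr : IsStarProjection r) :
    IsStarProjection (scalar B r) :=
  ⟨by rw [IsIdempotentElem, ← map_mul, hr.isIdempotentElem.eq],
   by simp [IsSelfAdjoint, scalar_apply, star_eq_conjTranspose, hr.isSelfAdjoint.star_eq]⟩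

lemma scalar_mul_eq_zero {K : TwoSidedIdeal R} (hr : ∀ k ∈ K, r * k = 0) {X : Matrix B B R}
    (hX : ∀ i j, X i j ∈ K) : scalar B r * X = 0 := by
  ext i j
  rw [scalar_apply, diagonal_mul, zero_apply, hr _ (hX i j)]

end Matrix

structure FactorSystem (G : Type*) [Group G] where
  toFun : G → G → ℂ
  norm_eq_one : ∀ f g, ‖toFun f g‖ = 1
  one_left : ∀ f, toFun 1 f = 1
  one_right : ∀ f, toFun f 1 = 1
  cocycle : ∀ f g h, toFun f g * toFun (f * g) h = toFun f (g * h) * toFun g h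

namespace FactorSystem

variable {G : Type*} [Group G] (μ : FactorSystem G)

instance : CoeFun (FactorSystem G) fun _ => G → G → ℂ := ⟨toFun⟩

lemma star_mul_self (f g : G) : star (μ f g) * μ f g = 1 := by
  rw [Complex.star_def, Complex.conj_mul', μ.norm_eq_one]
  norm_num

lemma mul_star_self (f g : G) : μ f g * star (μ f g) = 1 := by
  rw [mul_comm, μ.star_mul_self]

lemma ne_zero (f g : G) : μ f g ≠ 0 :=
  left_ne_zero_of_mul_eq_one (μ.mul_star_self f g)

lemma apply_inv_self (f : G) : μ f⁻¹ f = μ f f⁻¹ := by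
  simpa [μ.one_left, μ.one_right] using μ.cocycle f⁻¹ f f⁻¹

lemma star_apply_self_inv_mul (f g : G) :
    star (μ f f⁻¹) * μ f⁻¹ (f * g) = star (μ f g) := by
  have h := μ.cocycle f⁻¹ f g
  rw [inv_mul_cancel, μ.one_left, apply_inv_self] at h
  apply mul_right_cancel₀ (μ.ne_zero f g)
  rw [mul_assoc, ← h, ← mul_assoc, star_mul_self, one_mul, star_mul_self]

lemma apply_self_inv_mul_apply_self_inv (a b : G) :
    μ b b⁻¹ * μ a a⁻¹ = μ a b * μ (a * b) (b⁻¹ * a⁻¹) * μ b⁻¹ a⁻¹ := by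
  have E2 := μ.cocycle a b b⁻¹
  have E1 := μ.cocycle (a * b) b⁻¹ a⁻¹
  simp only [mul_inv_cancel, μ.one_right, mul_inv_cancel_right] at E2 E1
  linear_combination -μ a a⁻¹ * E2 + μ a b * E1

end FactorSystem

/-- `x : TwistedGroupAlgebra μ` stands for `∑ g, x g • [g]`, with `[f] * [h] = μ f h • [f * h]`. -/
def TwistedGroupAlgebra {G : Type*} [Group G] (_μ : FactorSystem G) : Type _ := G → ℂ

namespace TwistedGroupAlgebra

variable {G : Type*} [Group G] {μ : FactorSystem G}

instance : AddCommGroup (TwistedGroupAlgebra μ) := inferInstanceAs (AddCommGroup (G → ℂ))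

instance : Module ℂ (TwistedGroupAlgebra μ) := inferInstanceAs (Module ℂ (G → ℂ))

@[ext] lemma ext {x y : TwistedGroupAlgebra μ} (h : ∀ g, x g = y g) : x = y := funext h

@[simp] lemma add_apply (x y : TwistedGroupAlgebra μ) (g : G) : (x + y) g = x g + y g := rfl

@[simp] lemma zero_apply (g : G) : (0 : TwistedGroupAlgebra μ) g = 0 := rfl

@[simp] lemma smul_apply (c : ℂ) (x : TwistedGroupAlgebra μ) (g : G) : (c • x) g = c * x g := rfl

lemma sum_apply {ι : Type*} (s : Finset ι) (x : ι → TwistedGroupAlgebra μ) (g : G) :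
    (∑ i ∈ s, x i) g = ∑ i ∈ s, x i g :=
  Finset.sum_apply g s x

instance : Star (TwistedGroupAlgebra μ) where
  star x g := star (x g⁻¹ * μ g⁻¹ g)

lemma star_apply (x : TwistedGroupAlgebra μ) (g : G) : (star x) g = star (x g⁻¹ * μ g⁻¹ g) :=
  rfl

section Mul

variable [Fintype G]

instance : Mul (TwistedGroupAlgebra μ) where
  mul x y g := ∑ f, x f * y (f⁻¹ * g) * μ f (f⁻¹ * g)

lemma mul_apply (x y : TwistedGroupAlgebra μ) (g : G) :
    (x * y) g = ∑ f, x f * y (f⁻¹ * g) * μ f (f⁻¹ * g) := rfl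

lemma star_mul_apply (x y : TwistedGroupAlgebra μ) (g : G) :
    (star x * y) g = ∑ f, star (μ f g) * (star (x f) * y (f * g)) := by
  rw [mul_apply, ← Equiv.sum_comp (Equiv.inv G)]
  refine Finset.sum_congr rfl fun f _ => ?_
  simp only [Equiv.inv_apply, star_apply, inv_inv, star_mul']
  linear_combination star (x f) * y (f * g) * μ.star_apply_self_inv_mul f g

lemma mul_apply_one_comm (x y : TwistedGroupAlgebra μ) : (x * y) 1 = (y * x) 1 := by
  rw [mul_apply, mul_apply, ← Equiv.sum_comp (Equiv.inv G)]
  refine Finset.sum_congr rfl fun f _ => ?_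
  simp only [Equiv.inv_apply, inv_inv, mul_one, μ.apply_inv_self]
  ring

end Mul

instance [DecidableEq G] : One (TwistedGroupAlgebra μ) where
  one := Pi.single 1 1

lemma one_apply [DecidableEq G] (g : G) :
    (1 : TwistedGroupAlgebra μ) g = if g = 1 then 1 else 0 :=
  Pi.single_apply 1 1 g

variable [Fintype G] [DecidableEq G]

instance : Ring (TwistedGroupAlgebra μ) :=
  { (inferInstance : AddCommGroup (TwistedGroupAlgebra μ)) with
    left_distrib := fun x y z => by
      ext g; simp only [mul_apply, add_apply, mul_add, add_mul, Finset.sum_add_distrib]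
    right_distrib := fun x y z => by
      ext g; simp only [mul_apply, add_apply, add_mul, Finset.sum_add_distrib]
    zero_mul := fun x => by ext g; simp [mul_apply]
    mul_zero := fun x => by ext g; simp [mul_apply]
    one_mul := fun x => by
      ext g
      rw [mul_apply, Finset.sum_eq_single 1 (fun f _ hf => by simp [one_apply, hf]) (by simp)]
      simp [one_apply, μ.one_left]
    mul_one := fun x => by
      ext g
      rw [mul_apply, Finset.sum_eq_single g
        (fun f _ hf => by simp [one_apply, inv_mul_eq_one, hf]) (by simp)]
      simp [one_apply, μ.one_right]
    mul_assoc := fun x y z => by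
      ext g
      simp only [mul_apply, Finset.sum_mul, Finset.mul_sum]
      rw [Finset.sum_comm]
      refine Finset.sum_congr rfl fun k _ => ?_
      rw [← Equiv.sum_comp (Equiv.mulLeft k)]
      refine Finset.sum_congr rfl fun m _ => ?_
      simp only [Equiv.coe_mulLeft, inv_mul_cancel_left, _root_.mul_inv_rev, mul_assoc]
      have h := μ.cocycle k m (m⁻¹ * (k⁻¹ * g))
      rw [mul_inv_cancel_left] at h
      linear_combination (x k * y m * z (m⁻¹ * (k⁻¹ * g))) * h }

instance : Algebra ℂ (TwistedGroupAlgebra μ) :=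
  Algebra.ofModule
    (fun c x y => by
      ext g; simp only [mul_apply, smul_apply, Finset.mul_sum]
      exact Finset.sum_congr rfl fun _ _ => by ring)
    (fun c x y => by
      ext g; simp only [mul_apply, smul_apply, Finset.mul_sum]
      exact Finset.sum_congr rfl fun _ _ => by ring)

instance : StarRing (TwistedGroupAlgebra μ) where
  star_involutive x := by
    ext g
    simp only [star_apply, inv_inv, star_mul', star_star, μ.apply_inv_self, mul_assoc,
      μ.mul_star_self, mul_one]
  star_add x y := by ext g; simp only [star_apply, add_apply, add_mul, star_add]
  star_mul x y := by
    ext g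
    simp only [star_apply, mul_apply, star_mul', star_sum, Finset.sum_mul]
    conv_rhs => rw [← Equiv.sum_comp (Equiv.mulLeft g)]
    refine Finset.sum_congr rfl fun m _ => ?_
    simp only [Equiv.coe_mulLeft, _root_.mul_inv_rev, inv_inv, mul_assoc, inv_mul_cancel, mul_one]
    have H := congrArg star (μ.apply_self_inv_mul_apply_self_inv m (m⁻¹ * g⁻¹))
    simp only [_root_.mul_inv_rev, inv_inv, mul_inv_cancel_left, mul_inv_cancel, mul_one,
      mul_assoc, star_mul'] at H
    have hcm := μ.star_mul_self (g * m) m⁻¹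
    linear_combination (-(star (x m) * star (y (m⁻¹ * g⁻¹)) * μ (g * m) m⁻¹)) * H +
      (-(star (x m) * star (y (m⁻¹ * g⁻¹)) * star (μ m (m⁻¹ * g⁻¹)) * star (μ g⁻¹ g))) * hcm

instance : StarModule ℂ (TwistedGroupAlgebra μ) where
  star_smul c x := by ext g; simp only [star_apply, smul_apply, star_mul', mul_assoc]

open scoped InnerProductSpace

def toL2 : TwistedGroupAlgebra μ ≃ₗ[ℂ] EuclideanSpace ℂ G := (WithLp.linearEquiv 2 ℂ (G → ℂ)).symm

@[simp] lemma toL2_apply (x : TwistedGroupAlgebra μ) (g : G) : toL2 x g = x g := rfl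

lemma inner_toL2 (x y : TwistedGroupAlgebra μ) : ⟪toL2 x, toL2 y⟫_ℂ = (star x * y) 1 := by
  simp [star_mul_apply, μ.one_right, PiLp.inner_apply, mul_comm]

lemma inner_toL2_mul_left (a x y : TwistedGroupAlgebra μ) :
    ⟪toL2 x, toL2 (a * y)⟫_ℂ = ⟪toL2 (star a * x), toL2 y⟫_ℂ := by
  rw [inner_toL2, inner_toL2, star_mul, star_star, mul_assoc]

lemma inner_toL2_mul_right (a x y : TwistedGroupAlgebra μ) :
    ⟪toL2 x, toL2 (y * a)⟫_ℂ = ⟪toL2 (x * star a), toL2 y⟫_ℂ := by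
  rw [inner_toL2, inner_toL2, ← mul_assoc, mul_apply_one_comm, star_mul, star_star, mul_assoc]

theorem exists_one_sub_mem_and_mul_eq_zero (K : TwoSidedIdeal (TwistedGroupAlgebra μ)) :
    ∃ r, 1 - r ∈ K ∧ ∀ k ∈ K, r * k = 0 ∧ k * r = 0 := by
  let K' := (K.asIdeal.restrictScalars ℂ).map (toL2 (μ := μ)).toLinearMap
  have mem_K' {k} (hk : k ∈ K) : toL2 k ∈ K' := Submodule.mem_map_of_mem (by simpa using hk)
  obtain ⟨s, hs, t, ht, hst⟩ := K'.exists_add_mem_mem_orthogonal (toL2 1)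
  obtain ⟨q, hq, rfl⟩ := Submodule.mem_map.mp hs
  set r := (toL2 (μ := μ)).symm t
  have hr : ∀ k ∈ K, ⟪toL2 k, toL2 r⟫_ℂ = 0 := fun k hk => by
    simpa [r] using (Submodule.mem_orthogonal _ _).mp ht _ (mem_K' hk)
  have eq_zero {z} (hz : z ∈ K) (hperp : ∀ k ∈ K, ⟪toL2 k, toL2 z⟫_ℂ = 0) : z = 0 :=
    toL2.map_eq_zero_iff.mp (inner_self_eq_zero.mp (hperp z hz))
  refine ⟨r, ?_, fun k hk => ⟨?_, ?_⟩⟩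
  · have : 1 - r = q := toL2.injective <| by
      rw [map_sub, hst]
      simp [r]
    simpa [this] using hq
  · refine eq_zero (K.mul_mem_left r k hk) fun k' hk' => ?_
    rw [inner_toL2_mul_right]
    exact hr _ (K.mul_mem_right _ _ hk')
  · refine eq_zero (K.mul_mem_right k r hk) fun k' hk' => ?_
    rw [inner_toL2_mul_left]
    exact hr _ (K.mul_mem_left _ _ hk')

end TwistedGroupAlgebra

structure IsProjectiveUnitaryRep {G : Type*} [Group G] (μ : FactorSystem G) {A : Type*}
    [Fintype A] [DecidableEq A] (U : G → Matrix A A ℂ) : Prop where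
  mem_unitaryGroup : ∀ f, U f ∈ unitaryGroup A ℂ
  map_one : U 1 = 1
  map_mul : ∀ f g, U f * U g = μ f g • U (f * g)

namespace IsProjectiveUnitaryRep

variable {G : Type*} [Group G] {μ : FactorSystem G} {A : Type*} [Fintype A] [DecidableEq A]
  {U : G → Matrix A A ℂ}

lemma conjTranspose_mul (hU : IsProjectiveUnitaryRep μ U) (f g : G) :
    (U f)ᴴ * U (f * g) = star (μ f g) • U g := by
  rw [← one_smul ℂ (U (f * g)), ← μ.star_mul_self f g, mul_smul, ← hU.map_mul, Matrix.mul_smul,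
    ← Matrix.mul_assoc, ← star_eq_conjTranspose, mem_unitaryGroup_iff'.mp (hU.mem_unitaryGroup f),
    Matrix.one_mul]

lemma conjTranspose_eq (hU : IsProjectiveUnitaryRep μ U) (f : G) :
    (U f)ᴴ = star (μ f f⁻¹) • U f⁻¹ := by
  simpa [hU.map_one] using hU.conjTranspose_mul f f⁻¹

end IsProjectiveUnitaryRep

namespace TwistedGroupAlgebra

variable {G : Type*} [Group G] {μ : FactorSystem G} {B : Type*}

def matrixEquiv : (G → Matrix B B ℂ) ≃ Matrix B B (TwistedGroupAlgebra μ) where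
  toFun W := Matrix.of fun c b f => W f c b
  invFun M f := Matrix.of fun c b => M c b f
  left_inv _ := rfl
  right_inv _ := rfl

@[simp] lemma matrixEquiv_apply (W : G → Matrix B B ℂ) (c b : B) (f : G) :
    matrixEquiv (μ := μ) W c b f = W f c b := rfl

variable [Fintype G] [DecidableEq G] [Fintype B]

lemma conjTranspose_matrixEquiv_mul_apply (W : G → Matrix B B ℂ) (b b' : B) (g : G) :
    ((matrixEquiv W)ᴴ * matrixEquiv W : Matrix B B (TwistedGroupAlgebra μ)) b b' g =
      (∑ f, star (μ f g) • ((W f)ᴴ * W (f * g))) b b' := by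
  simp only [Matrix.mul_apply, conjTranspose_apply, sum_apply, star_mul_apply,
    matrixEquiv_apply, Matrix.sum_apply, Matrix.smul_apply, smul_eq_mul, Finset.mul_sum]
  exact Finset.sum_comm

lemma sum_star_smul_conjTranspose_mul_eq_ite [DecidableEq B] {W : G → Matrix B B ℂ}
    (hW : (matrixEquiv W)ᴴ * matrixEquiv W = (1 : Matrix B B (TwistedGroupAlgebra μ))) (g : G) :
    ∑ f, star (μ f g) • ((W f)ᴴ * W (f * g)) = if g = 1 then 1 else 0 := by
  ext b b'
  rw [← conjTranspose_matrixEquiv_mul_apply, hW]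
  by_cases hg : g = 1 <;> by_cases hb : b = b' <;> simp [Matrix.one_apply, one_apply, hg, hb]

variable {A : Type*} [Fintype A] [DecidableEq A] {U : G → Matrix A A ℂ}

def lift (hU : IsProjectiveUnitaryRep μ U) : TwistedGroupAlgebra μ →⋆ₐ[ℂ] Matrix A A ℂ where
  toFun x := ∑ g, x g • U g
  map_one' := by simp [one_apply, hU.map_one]
  map_mul' x y := by
    simp only [mul_apply, Finset.sum_smul, Finset.sum_mul, Finset.mul_sum, Matrix.smul_mul,
      Matrix.mul_smul, hU.map_mul, smul_smul]
    conv_lhs => rw [Finset.sum_comm]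
    conv_rhs => rw [Finset.sum_comm]
    refine Finset.sum_congr rfl fun f _ => ?_
    rw [← Equiv.sum_comp (Equiv.mulLeft f)]
    refine Finset.sum_congr rfl fun h _ => ?_
    simp only [Equiv.coe_mulLeft, inv_mul_cancel_left]
    congr 1
    ring
  map_zero' := by simp
  map_add' x y := by simp [add_smul, Finset.sum_add_distrib]
  commutes' c := by simp [Algebra.algebraMap_eq_smul_one, one_apply, hU.map_one]
  map_star' x := by
    simp only [star_apply, star_eq_conjTranspose, conjTranspose_sum, conjTranspose_smul]
    rw [← Equiv.sum_comp (Equiv.inv G)]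
    refine Finset.sum_congr rfl fun f _ => ?_
    simp only [Equiv.inv_apply, inv_inv, star_mul', hU.conjTranspose_eq f, smul_smul]

lemma lift_apply (hU : IsProjectiveUnitaryRep μ U) (x : TwistedGroupAlgebra μ) :
    lift hU x = ∑ g, x g • U g := rfl

lemma sum_kronecker_eq (hU : IsProjectiveUnitaryRep μ U) (W : G → Matrix B B ℂ) :
    ∑ f, U f ⊗ₖ W f = compCommRingEquiv A B ((matrixEquiv W).map (lift hU)) := by
  ext ⟨a, c⟩ ⟨a', b⟩
  simp [compCommRingEquiv_apply, lift_apply, Matrix.sum_apply, mul_comm]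

variable [DecidableEq B]

lemma map_lift_conjTranspose_mul_eq_one (hU : IsProjectiveUnitaryRep μ U)
    {W : G → Matrix B B ℂ} (hW : ∑ f, U f ⊗ₖ W f ∈ unitaryGroup (A × B) ℂ) :
    ((matrixEquiv W)ᴴ * matrixEquiv W).map (lift hU) = 1 := by
  rw [mem_unitaryGroup_iff', sum_kronecker_eq hU, ← compCommRingEquiv_star, ← map_mul,
    ← map_one (compCommRingEquiv A B)] at hW
  rw [Matrix.map_mul, conjTranspose_map _ (map_star (lift hU))]
  exact (compCommRingEquiv A B).injective hW

lemma scalar_mul_conjTranspose_mul_eq_self (hU : IsProjectiveUnitaryRep μ U)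
    {W : G → Matrix B B ℂ} (hW : ∑ f, U f ⊗ₖ W f ∈ unitaryGroup (A × B) ℂ)
    {r : TwistedGroupAlgebra μ} (hr : ∀ k ∈ TwoSidedIdeal.ker (lift hU), r * k = 0) :
    scalar B r * ((matrixEquiv W)ᴴ * matrixEquiv W) = scalar B r := by
  rw [← sub_eq_zero, ← mul_sub_one]
  refine scalar_mul_eq_zero hr fun b b' => ?_
  rw [TwoSidedIdeal.mem_ker, Matrix.sub_apply, map_sub, ← Matrix.map_apply (f := lift hU),
    map_lift_conjTranspose_mul_eq_one hU hW, Matrix.one_apply, Matrix.one_apply,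
    apply_ite (lift hU), map_one, map_zero, sub_self]

lemma sum_kronecker_scalar_mul_add (hU : IsProjectiveUnitaryRep μ U) {r : TwistedGroupAlgebra μ}
    (hr : lift hU r = 1) (W : G → Matrix B B ℂ) :
    ∑ f, U f ⊗ₖ matrixEquiv.symm (scalar B r * matrixEquiv W + (1 - scalar B r)) f =
      ∑ f, U f ⊗ₖ W f := by
  rw [sum_kronecker_eq hU, sum_kronecker_eq hU, Equiv.apply_symm_apply]
  simp [Matrix.map_add, Matrix.map_mul, Matrix.map_sub, scalar_apply, hr]

end TwistedGroupAlgebra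

open TwistedGroupAlgebra in
theorem stmt_7_general {G : Type*} [Group G] [Fintype G] [DecidableEq G]
    (μ : G → G → ℂ)
    (hμabs : ∀ f g : G, ‖μ f g‖ = 1)
    (hμel : ∀ f : G, μ 1 f = 1) (hμer : ∀ f : G, μ f 1 = 1)
    (hμc : ∀ f g h : G, μ h f * μ (h * f) g = μ h (f * g) * μ f g)
    {A : Type*} [Fintype A] [DecidableEq A]
    (U : G → Matrix A A ℂ)
    (hUu : ∀ f : G, U f ∈ Matrix.unitaryGroup A ℂ)
    (hUe : U 1 = 1)
    (hUm : ∀ f g : G, U f * U g = μ f g • U (f * g))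
    {B : Type*} [Fintype B] [DecidableEq B]
    (W : G → Matrix B B ℂ)
    (h𝒰 : (∑ f : G, (U f) ⊗ₖ (W f)) ∈ Matrix.unitaryGroup (A × B) ℂ) :
    ∃ W' : G → Matrix B B ℂ,
      (∑ f : G, (U f) ⊗ₖ (W' f)) = (∑ f : G, (U f) ⊗ₖ (W f)) ∧
      ∀ g : G, ∑ f : G, star (μ f g) • ((W' f)ᴴ * W' (f * g))
        = if g = 1 then (1 : Matrix B B ℂ) else 0 := by
  let μ' : FactorSystem G := ⟨μ, hμabs, hμel, hμer, fun f g h => hμc g h f⟩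
  have hU : IsProjectiveUnitaryRep μ' U := ⟨hUu, hUe, hUm⟩
  obtain ⟨r, hr1, hrK⟩ := exists_one_sub_mem_and_mul_eq_zero (TwoSidedIdeal.ker (lift hU))
  have hφr : lift hU r = 1 := by
    rwa [TwoSidedIdeal.mem_ker, map_sub, map_one, sub_eq_zero, eq_comm] at hr1
  have hr : IsStarProjection (scalar B r) := isStarProjection_scalar <|
    TwoSidedIdeal.isStarProjection_of_one_sub_mem
      (fun k hk => by rw [TwoSidedIdeal.mem_ker] at hk ⊢; rw [map_star, hk, star_zero]) hr1 hrK
  have hrc : ∀ M, Commute (scalar B r) M :=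
    scalar_commute r (TwoSidedIdeal.commute_of_one_sub_mem hr1 hrK)
  refine ⟨matrixEquiv.symm (scalar B r * matrixEquiv W + (1 - scalar B r)),
    sum_kronecker_scalar_mul_add hU hφr W, sum_star_smul_conjTranspose_mul_eq_ite (μ := μ') ?_⟩
  rw [Equiv.apply_symm_apply]
  exact hr.star_mul_self_add_one_sub_eq_one hrc
    (scalar_mul_conjTranspose_mul_eq_self hU h𝒰 fun k hk => (hrK k hk).1)

theorem stmt_7 {G : Type*} [Group G] [Fintype G] [DecidableEq G]
    (μ : G → G → ℂ)
    (hμabs : ∀ f g : G, ‖μ f g‖ = 1)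
    (hμel : ∀ f : G, μ 1 f = 1) (hμer : ∀ f : G, μ f 1 = 1)
    (hμc : ∀ f g h : G, μ h f * μ (h * f) g = μ h (f * g) * μ f g)
    {A : Type*} [Fintype A] [DecidableEq A] [Nonempty A]
    (U : G → Matrix A A ℂ)
    (hUu : ∀ f : G, U f ∈ Matrix.unitaryGroup A ℂ)
    (hUe : U 1 = 1)
    (hUm : ∀ f g : G, U f * U g = μ f g • U (f * g))
    {B : Type*} [Fintype B] [DecidableEq B] [Nonempty B]
    (W : G → Matrix B B ℂ)
    (h𝒰 : (∑ f : G, (U f) ⊗ₖ (W f)) ∈ Matrix.unitaryGroup (A × B) ℂ) :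
    ∃ W' : G → Matrix B B ℂ,
      (∑ f : G, (U f) ⊗ₖ (W' f)) = (∑ f : G, (U f) ⊗ₖ (W f)) ∧
      ∀ g : G, ∑ f : G, star (μ f g) • ((W' f)ᴴ * W' (f * g))
        = if g = 1 then (1 : Matrix B B ℂ) else 0 :=
  stmt_7_general μ hμabs hμel hμer hμc U hUu hUe hUm W h𝒰
end

section
/- Let G be a finite group, μ : G → G → ℂ a factor system (|μ(f,g)| = 1 for all f,g; μ(e,f) = μ(f,e) = 1; and μ(h,f)μ(hf,g) = μ(h,fg)μ(f,g) for all f,g,h). Let ι be a finite index type, d : ι → ℕ with d λ ≥ 1, and for each λ ∈ ι let D λ : G → Matrix (Fin (d λ)) (Fin (d λ)) ℂ be a projective unitary representation of G with factor system μ that is irreducible (the only ℂ-subspaces of Fin (d λ) → ℂ invariant under every matrix D λ f are the zero subspace and the whole space) and such that the D λ are pairwise inequivalent (for λ ≠ λ' there is no invertible matrix S with S · (D λ f) = (D λ' f) · S for all f ∈ G). Let σ be a nonempty finite index type, ℓ : σ → ι, and define U : G → Matrix (Σ i : σ, Fin (d (ℓ i))) (Σ i : σ, Fin (d (ℓ i)))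 ℂ as the block-diagonal matrix U f = blockDiagonal' (fun i => D (ℓ i) f). Then the dimension of the ℂ-linear span of the set {U f : f ∈ G} equals Σ_{λ ∈ image of ℓ} (d λ)². -/
/-!
Schur orthogonality for projective unitary representations sharing a factor system `μ`.
Unitarity gives `D(gf)ᴴ D(g) = μ(g,f) D(f)ᴴ`, so the factor system cancels in the average
`X ↦ ∑_f D₁(f) X D₂(f)ᴴ`, which therefore intertwines `D₂` with `D₁`. By Schur's lemma it
vanishes for inequivalent irreducibles and equals `|G| tr X / dim` times the identity when
`D₁ = D₂`. Read entrywise, this makes the matrix coefficients of pairwise inequivalent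
irreducibles orthogonal, so `f ↦ (D_λ f)_λ` spans the whole product of matrix algebras.
Repeating blocks along the block diagonal is an injective linear map, so the span of the
`U f` has dimension `∑ (d λ)²` over the distinct `λ` that occur.
-/

open Matrix

namespace ProjRep

variable {G : Type*} {m n : Type*} [Fintype m] [Fintype n]

def IsIrreducible (D : G → Matrix n n ℂ) : Prop :=
  ∀ S : Submodule ℂ (n → ℂ), (∀ f, ∀ v ∈ S, D f *ᵥ v ∈ S) → S = ⊥ ∨ S = ⊤

def average [Fintype G] (D₁ : G → Matrix m m ℂ) (D₂ : G → Matrix n n ℂ) (X : Matrix m n ℂ) :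
    Matrix m n ℂ :=
  ∑ f, D₁ f * X * (D₂ f)ᴴ

variable [DecidableEq n]

section Average

variable [Group G] {μ : G → G → ℂ}

theorem conjTranspose_mul_eq_smul_conjTranspose {D : G → Matrix n n ℂ}
    (hu : ∀ f, D f ∈ unitaryGroup n ℂ) (hmul : ∀ f g, D f * D g = μ f g • D (f * g)) (f g : G) :
    (D (g * f))ᴴ * D g = μ g f • (D f)ᴴ := by
  have hu' : ∀ f, (D f)ᴴ * D f = 1 ∧ D f * (D f)ᴴ = 1 := fun f =>
    ⟨(mem_unitaryGroup_iff').mp (hu f), (mem_unitaryGroup_iff).mp (hu f)⟩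
  calc (D (g * f))ᴴ * D g = (D (g * f))ᴴ * (D g * D f) * (D f)ᴴ := by
        rw [Matrix.mul_assoc, Matrix.mul_assoc, (hu' f).2, Matrix.mul_one]
    _ = μ g f • (D f)ᴴ := by
        rw [hmul, Matrix.mul_smul, (hu' _).1, smul_mul_assoc, Matrix.one_mul]

theorem average_mul [Fintype G] {D₁ : G → Matrix m m ℂ} {D₂ : G → Matrix n n ℂ}
    (hmul₁ : ∀ f g, D₁ f * D₁ g = μ f g • D₁ (f * g))
    (hu₂ : ∀ f, D₂ f ∈ unitaryGroup n ℂ) (hmul₂ : ∀ f g, D₂ f * D₂ g = μ f g • D₂ (f * g))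
    (X : Matrix m n ℂ) (g : G) : average D₁ D₂ X * D₂ g = D₁ g * average D₁ D₂ X := by
  symm
  calc D₁ g * average D₁ D₂ X = ∑ f, D₁ (g * f) * X * ((D₂ (g * f))ᴴ * D₂ g) := by
        refine (Matrix.mul_sum ..).trans (Finset.sum_congr rfl fun f _ => ?_)
        rw [conjTranspose_mul_eq_smul_conjTranspose hu₂ hmul₂, ← Matrix.mul_assoc,
          ← Matrix.mul_assoc, hmul₁, Matrix.mul_smul, Matrix.smul_mul, Matrix.smul_mul]
    _ = average D₁ D₂ X * D₂ g := by
        simp only [average, Matrix.sum_mul, Matrix.mul_assoc]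
        exact Equiv.sum_comp (Equiv.mulLeft g) fun f => D₁ f * (X * ((D₂ f)ᴴ * D₂ g))

end Average

variable [DecidableEq m]

def IsEquivalent (D₁ : G → Matrix m m ℂ) (D₂ : G → Matrix n n ℂ) : Prop :=
  ∃ (S : Matrix n m ℂ) (T : Matrix m n ℂ), S * T = 1 ∧ T * S = 1 ∧ ∀ f, S * D₁ f = D₂ f * S

theorem IsIrreducible.eq_zero_or_invertible_of_intertwines {D₁ : G → Matrix m m ℂ}
    {D₂ : G → Matrix n n ℂ} {E : Matrix m n ℂ} (h₁ : IsIrreducible D₁) (h₂ : IsIrreducible D₂)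
    (hE : ∀ g, E * D₂ g = D₁ g * E) : E = 0 ∨ ∃ T : Matrix n m ℂ, E * T = 1 ∧ T * E = 1 := by
  refine or_iff_not_imp_left.mpr fun hE0 => ?_
  have hE0' : toLin' E ≠ 0 := by rwa [ne_eq, LinearEquiv.map_eq_zero_iff]
  have hker : LinearMap.ker (toLin' E) = ⊥ := by
    refine (h₂ _ fun f v hv => ?_).resolve_right (mt LinearMap.ker_eq_top.mp hE0')
    rw [LinearMap.mem_ker, toLin'_apply] at hv ⊢
    rw [mulVec_mulVec, hE, ← mulVec_mulVec, hv, mulVec_zero]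
  have hrange : LinearMap.range (toLin' E) = ⊤ := by
    refine (h₁ _ ?_).resolve_left (mt LinearMap.range_eq_bot.mp hE0')
    rintro f _ ⟨v, rfl⟩
    exact ⟨D₂ f *ᵥ v, by simp only [toLin'_apply, mulVec_mulVec, hE]⟩
  let e := LinearEquiv.ofBijective (toLin' E)
    ⟨LinearMap.ker_eq_bot.mp hker, LinearMap.range_eq_top.mp hrange⟩
  refine ⟨LinearMap.toMatrix' e.symm.toLinearMap, toLin'.injective ?_, toLin'.injective ?_⟩
  · rw [toLin'_mul, toLin'_toMatrix', toLin'_one]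
    exact LinearMap.ext e.apply_symm_apply
  · rw [toLin'_mul, toLin'_toMatrix', toLin'_one]
    exact LinearMap.ext e.symm_apply_apply

theorem IsIrreducible.exists_eq_smul_one_of_commute {D : G → Matrix n n ℂ} {E : Matrix n n ℂ}
    (h : IsIrreducible D) (hE : ∀ g, E * D g = D g * E) : ∃ c : ℂ, E = c • 1 := by
  cases isEmpty_or_nonempty n
  · exact ⟨0, Subsingleton.elim _ _⟩
  obtain ⟨c, hc⟩ := Module.End.exists_eigenvalue (toLin' E)
  obtain ⟨v, hv⟩ := hc.exists_hasEigenvector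
  refine ⟨c, sub_eq_zero.mp
    ((h.eq_zero_or_invertible_of_intertwines h fun g => ?_).resolve_right ?_)⟩
  · simp only [sub_mul, mul_sub, hE, smul_mul_assoc, mul_smul_comm, one_mul, mul_one]
  · rintro ⟨T, -, hT⟩
    have hv0 : (E - c • 1) *ᵥ v = 0 := by
      simpa [sub_mulVec, smul_mulVec, sub_eq_zero] using hv.apply_eq_smul
    exact hv.right (by simpa [hT] using congrArg (T *ᵥ ·) hv0)

theorem average_single_apply [Fintype G] {D₁ : G → Matrix m m ℂ} {D₂ : G → Matrix n n ℂ}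
    (a b : m) (c e : n) :
    average D₁ D₂ (single b c 1) a e = ∑ f, D₁ f a b * star (D₂ f e c) := by
  simp [average, Matrix.sum_apply, mul_apply, single_apply, ite_and]

section Orthogonality

variable [Group G] [Fintype G] {μ : G → G → ℂ}

theorem average_eq_zero {D₁ : G → Matrix m m ℂ} {D₂ : G → Matrix n n ℂ}
    (h₁ : IsIrreducible D₁) (h₂ : IsIrreducible D₂) (hne : ¬ IsEquivalent D₂ D₁)
    (hmul₁ : ∀ f g, D₁ f * D₁ g = μ f g • D₁ (f * g))
    (hu₂ : ∀ f, D₂ f ∈ unitaryGroup n ℂ) (hmul₂ : ∀ f g, D₂ f * D₂ g = μ f g • D₂ (f * g))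
    (X : Matrix m n ℂ) : average D₁ D₂ X = 0 := by
  have hE := average_mul hmul₁ hu₂ hmul₂ X
  exact (h₁.eq_zero_or_invertible_of_intertwines h₂ hE).resolve_right
    fun ⟨T, hST, hTS⟩ => hne ⟨_, T, hST, hTS, hE⟩

theorem card_smul_average_self {D : G → Matrix n n ℂ} (h : IsIrreducible D)
    (hu : ∀ f, D f ∈ unitaryGroup n ℂ) (hmul : ∀ f g, D f * D g = μ f g • D (f * g))
    (X : Matrix n n ℂ) :
    (Fintype.card n : ℂ) • average D D X = (Fintype.card G * X.trace) • 1 := by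
  obtain ⟨c, hc⟩ := h.exists_eq_smul_one_of_commute (average_mul hmul hu hmul X)
  have htrace : (average D D X).trace = Fintype.card G * X.trace := by
    have hterm : ∀ f, (D f * X * (D f)ᴴ).trace = X.trace := fun f => by
      rw [trace_mul_comm, ← Matrix.mul_assoc, ← star_eq_conjTranspose,
        (mem_unitaryGroup_iff').mp (hu f), Matrix.one_mul]
    simp only [average, trace_sum, hterm, Finset.sum_const, Finset.card_univ, nsmul_eq_mul]
  rw [← htrace, hc, smul_smul, trace_smul, trace_one, smul_eq_mul, mul_comm]

theorem sum_star_apply_smul_eq_zero {D₁ : G → Matrix m m ℂ} {D₂ : G → Matrix n n ℂ}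
    (h₁ : IsIrreducible D₁) (h₂ : IsIrreducible D₂) (hne : ¬ IsEquivalent D₁ D₂)
    (hu₁ : ∀ f, D₁ f ∈ unitaryGroup m ℂ) (hmul₁ : ∀ f g, D₁ f * D₁ g = μ f g • D₁ (f * g))
    (hmul₂ : ∀ f g, D₂ f * D₂ g = μ f g • D₂ (f * g)) (a b : m) :
    ∑ f, star (D₁ f a b) • D₂ f = 0 := by
  ext c e
  have h := congrFun₂ (average_eq_zero h₂ h₁ hne hmul₂ hu₁ hmul₁ (single e b 1)) c a
  rw [average_single_apply] at h
  simpa [Matrix.sum_apply, mul_comm] using h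

theorem card_smul_sum_star_apply_smul_self {D : G → Matrix n n ℂ} (h : IsIrreducible D)
    (hu : ∀ f, D f ∈ unitaryGroup n ℂ) (hmul : ∀ f g, D f * D g = μ f g • D (f * g)) (a b : n) :
    (Fintype.card n : ℂ) • ∑ f, star (D f a b) • D f = (Fintype.card G : ℂ) • single a b 1 := by
  ext c e
  have h := congrFun₂ (card_smul_average_self h hu hmul (single e b 1)) c a
  rw [Matrix.smul_apply, average_single_apply] at h
  simp only [Matrix.smul_apply, Matrix.sum_apply, smul_eq_mul, mul_comm (star _)] at h ⊢
  rw [h, mul_assoc]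
  congr 1
  by_cases hb : e = b <;> by_cases ha : c = a <;>
    simp [one_apply, trace_single_eq_of_ne, hb, ha, @eq_comm _ a, @eq_comm _ b]

variable {κ : Type*} [Fintype κ] [DecidableEq κ]
  {V : κ → Type*} [∀ k, Fintype (V k)] [∀ k, DecidableEq (V k)]
  {D : ∀ k, G → Matrix (V k) (V k) ℂ}

theorem span_range_pi_eq_top (hu : ∀ k f, D k f ∈ unitaryGroup (V k) ℂ)
    (hmul : ∀ k f g, D k f * D k g = μ f g • D k (f * g)) (hirr : ∀ k, IsIrreducible (D k))
    (hineq : Pairwise fun k k' => ¬ IsEquivalent (D k) (D k')) :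
    Submodule.span ℂ (Set.range fun f k => D k f) = ⊤ := by
  rw [eq_top_iff, ← (Pi.basis fun k => Matrix.stdBasis ℂ (V k) (V k)).span_eq,
    Submodule.span_le]
  rintro _ ⟨⟨k, a, b⟩, rfl⟩
  rw [Pi.basis_apply, Matrix.stdBasis_eq_single]
  have key : (Fintype.card (V k) : ℂ) • ∑ f, star (D k f a b) • (fun k' => D k' f) =
      (Fintype.card G : ℂ) • Pi.single k (single a b 1) := by
    funext k'
    rcases eq_or_ne k' k with rfl | hne
    · simpa [Finset.sum_apply] using
        card_smul_sum_star_apply_smul_self (hirr k') (hu k') (hmul k') a b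
    · simp only [Pi.smul_apply, Finset.sum_apply, Pi.single_eq_of_ne hne, smul_zero,
        sum_star_apply_smul_eq_zero (hirr k) (hirr k') (hineq hne.symm) (hu k) (hmul k) (hmul k')]
  have hG : (Fintype.card G : ℂ) ≠ 0 := Nat.cast_ne_zero.mpr Fintype.card_ne_zero
  rw [← inv_smul_smul₀ hG (Pi.single k _), ← key]
  exact Submodule.smul_mem _ _ (Submodule.smul_mem _ _ (Submodule.sum_mem _ fun f _ =>
    Submodule.smul_mem _ _ (Submodule.subset_span ⟨f, rfl⟩)))

theorem finrank_span_range_blockDiagonal' (hu : ∀ k f, D k f ∈ unitaryGroup (V k) ℂ)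
    (hmul : ∀ k f g, D k f * D k g = μ f g • D k (f * g)) (hirr : ∀ k, IsIrreducible (D k))
    (hineq : Pairwise fun k k' => ¬ IsEquivalent (D k) (D k'))
    {σ : Type*} [DecidableEq σ] {p : σ → κ} (hp : Function.Surjective p) :
    Module.finrank ℂ (Submodule.span ℂ (Set.range fun f => blockDiagonal' fun i => D (p i) f)) =
      ∑ k, Fintype.card (V k) ^ 2 := by
  let K : (∀ k, Matrix (V k) (V k) ℂ) →ₗ[ℂ] Matrix (Σ i, V (p i)) (Σ i, V (p i)) ℂ :=
    { toFun := fun x => blockDiagonal' fun i => x (p i)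
      map_add' := fun x y => blockDiagonal'_add _ _
      map_smul' := fun c x => blockDiagonal'_smul c _ }
  have hK : Function.Injective K := fun x y hxy => funext fun k => by
    have hxy' : (fun i => x (p i)) = fun i => y (p i) := blockDiagonal'_injective hxy
    obtain ⟨i, rfl⟩ := hp k
    exact congrFun hxy' i
  have hrange : (Set.range fun f => blockDiagonal' fun i => D (p i) f) =
      K '' Set.range fun f k => D k f := by
    rw [← Set.range_comp]
    rfl
  rw [hrange, Submodule.span_image, span_range_pi_eq_top hu hmul hirr hineq, Submodule.map_top,
    LinearMap.finrank_range_of_inj hK, Module.finrank_pi_fintype]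
  simp [Module.finrank_matrix, sq]

end Orthogonality

end ProjRep

theorem stmt_9_general {G : Type*} [Group G] [Fintype G]
    (μ : G → G → ℂ)
    {ι : Type*} [DecidableEq ι]
    (d : ι → ℕ)
    (D : (lam : ι) → G → Matrix (Fin (d lam)) (Fin (d lam)) ℂ)
    (hDu : ∀ (lam : ι) (f : G), D lam f ∈ Matrix.unitaryGroup (Fin (d lam)) ℂ)
    (hDm : ∀ (lam : ι) (f g : G), D lam f * D lam g = μ f g • D lam (f * g))
    (hirr : ∀ (lam : ι) (S : Submodule ℂ (Fin (d lam) → ℂ)),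
      (∀ (f : G), ∀ v ∈ S, (D lam f).mulVec v ∈ S) → S = ⊥ ∨ S = ⊤)
    (hineq : ∀ lam lam' : ι, lam ≠ lam' →
      ¬ ∃ (S : Matrix (Fin (d lam')) (Fin (d lam)) ℂ)
          (T : Matrix (Fin (d lam)) (Fin (d lam')) ℂ),
        S * T = 1 ∧ T * S = 1 ∧ ∀ f : G, S * D lam f = D lam' f * S)
    {σ : Type*} [Fintype σ] [DecidableEq σ]
    (ℓ : σ → ι)
    (U : G → Matrix (Σ i : σ, Fin (d (ℓ i))) (Σ i : σ, Fin (d (ℓ i))) ℂ)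
    (hU : ∀ f : G, U f = Matrix.blockDiagonal' (fun i : σ => D (ℓ i) f)) :
    Module.finrank ℂ (Submodule.span ℂ (Set.range U))
      = ∑ lam ∈ Finset.univ.image ℓ, (d lam) ^ 2 := by
  let p : σ → Finset.univ.image ℓ := fun i => ⟨ℓ i, Finset.mem_image_of_mem ℓ (Finset.mem_univ i)⟩
  have hp : Function.Surjective p := by
    rintro ⟨_, hk⟩
    obtain ⟨i, -, rfl⟩ := Finset.mem_image.mp hk
    exact ⟨i, rfl⟩
  have h := ProjRep.finrank_span_range_blockDiagonal' (D := fun k : Finset.univ.image ℓ => D k)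
    (fun k => hDu k) (fun k => hDm k) (fun k => hirr k)
    (fun k k' hne => hineq k k' (Subtype.coe_ne_coe.mpr hne)) hp
  rw [funext hU, ← Finset.sum_coe_sort]
  simpa only [Fintype.card_fin] using h

theorem stmt_9 {G : Type*} [Group G] [Fintype G] [DecidableEq G]
    (μ : G → G → ℂ)
    (hμabs : ∀ f g : G, ‖μ f g‖ = 1)
    (hμel : ∀ f : G, μ 1 f = 1) (hμer : ∀ f : G, μ f 1 = 1)
    (hμc : ∀ f g h : G, μ h f * μ (h * f) g = μ h (f * g) * μ f g)
    {ι : Type*} [Fintype ι] [DecidableEq ι]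
    (d : ι → ℕ) (hd : ∀ lam : ι, 1 ≤ d lam)
    (D : (lam : ι) → G → Matrix (Fin (d lam)) (Fin (d lam)) ℂ)
    (hDu : ∀ (lam : ι) (f : G), D lam f ∈ Matrix.unitaryGroup (Fin (d lam)) ℂ)
    (hDe : ∀ lam : ι, D lam 1 = 1)
    (hDm : ∀ (lam : ι) (f g : G), D lam f * D lam g = μ f g • D lam (f * g))
    (hirr : ∀ (lam : ι) (S : Submodule ℂ (Fin (d lam) → ℂ)),
      (∀ (f : G), ∀ v ∈ S, (D lam f).mulVec v ∈ S) → S = ⊥ ∨ S = ⊤)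
    (hineq : ∀ lam lam' : ι, lam ≠ lam' →
      ¬ ∃ (S : Matrix (Fin (d lam')) (Fin (d lam)) ℂ)
          (T : Matrix (Fin (d lam)) (Fin (d lam')) ℂ),
        S * T = 1 ∧ T * S = 1 ∧ ∀ f : G, S * D lam f = D lam' f * S)
    {σ : Type*} [Fintype σ] [DecidableEq σ] [Nonempty σ]
    (ℓ : σ → ι)
    (U : G → Matrix (Σ i : σ, Fin (d (ℓ i))) (Σ i : σ, Fin (d (ℓ i))) ℂ)
    (hU : ∀ f : G, U f = Matrix.blockDiagonal' (fun i : σ => D (ℓ i) f)) :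
    Module.finrank ℂ (Submodule.span ℂ (Set.range U))
      = ∑ lam ∈ Finset.univ.image ℓ, (d lam) ^ 2 :=
  stmt_9_general μ d D hDu hDm hirr hineq ℓ U hU
end

section
/- Let G be a finite group, μ : G → G → ℂ a factor system (|μ(f,g)| = 1 for all f,g; μ(e,f) = μ(f,e) = 1; and μ(h,f)μ(hf,g) = μ(h,fg)μ(f,g) for all f,g,h). Let ι be a finite index type, d : ι → ℕ with d λ ≥ 1, and for each λ ∈ ι let D λ : G → Matrix (Fin (d λ)) (Fin (d λ)) ℂ be an irreducible projective unitary representation of G with factor system μ (the only invariant subspaces of every D λ f are trivial), pairwise inequivalent (for λ ≠ λ' there is no invertible S with S · (D λ f) = (D λ' f) · S for all f), and suppose Σ_{λ∈ι} (d λ)² = |G|. Then the square matrix D̂, with rows indexed by triples K = (λ, j, k) (λ ∈ ι, j,k ∈ Fin (d λ)) and columns indexed by f ∈ G, defined by D̂(K, f) = √(d λ / |G|) · (D λ f)(j,k), is unitary. -/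
open Matrix

/-!
Schur orthogonality for projective representations sharing a factor system `μ`: for any matrix
`X`, the average `∑ f, A f * X * (B f)ᴴ` intertwines `A` and `B`, because the factors `μ g f`
picked up on both sides cancel (`|μ| = 1`). By Schur's lemma this average vanishes when `A` and
`B` are inequivalent, and is a scalar when `A = B`, the scalar being fixed by taking traces.
With `X` a matrix unit this says that the rows of `D̂` are orthonormal; since
`∑ λ, (d λ)² = |G|` the matrix `D̂` is square, so `D̂ D̂ᴴ = 1` forces `D̂ᴴ D̂ = 1`.
-/

namespace Matrix

variable {α n m : Type*} [Fintype n] [Fintype m] [DecidableEq m]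

def IsIrreducibleFamily (A : α → Matrix n n ℂ) : Prop :=
  ∀ S : Submodule ℂ (n → ℂ), (∀ a, ∀ v ∈ S, A a *ᵥ v ∈ S) → S = ⊥ ∨ S = ⊤

section Schur

variable {A : α → Matrix n n ℂ} {B : α → Matrix m m ℂ} {M : Matrix n m ℂ}

theorem mulVec_mem_ker_toLin' (hM : ∀ a, A a * M = M * B a) (a : α) {v : m → ℂ}
    (hv : v ∈ LinearMap.ker (toLin' M)) : B a *ᵥ v ∈ LinearMap.ker (toLin' M) := by
  rw [LinearMap.mem_ker, toLin'_apply] at hv ⊢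
  rw [mulVec_mulVec, ← hM, ← mulVec_mulVec, hv, mulVec_zero]

theorem mulVec_mem_range_toLin' (hM : ∀ a, A a * M = M * B a) (a : α) {w : n → ℂ}
    (hw : w ∈ LinearMap.range (toLin' M)) : A a *ᵥ w ∈ LinearMap.range (toLin' M) := by
  obtain ⟨v, rfl⟩ := hw
  exact ⟨B a *ᵥ v, by rw [toLin'_apply, toLin'_apply, mulVec_mulVec, ← hM, mulVec_mulVec]⟩

theorem eq_zero_or_ker_toLin'_eq_bot (hB : IsIrreducibleFamily B)
    (hM : ∀ a, A a * M = M * B a) : M = 0 ∨ LinearMap.ker (toLin' M) = ⊥ := by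
  rcases hB _ (mulVec_mem_ker_toLin' hM) with h | h
  · exact Or.inr h
  · exact Or.inl (toLin'.map_eq_zero_iff.mp (LinearMap.ker_eq_top.mp h))

theorem eq_zero_or_range_toLin'_eq_top (hA : IsIrreducibleFamily A)
    (hM : ∀ a, A a * M = M * B a) : M = 0 ∨ LinearMap.range (toLin' M) = ⊤ := by
  rcases hA _ (mulVec_mem_range_toLin' hM) with h | h
  · exact Or.inl (toLin'.map_eq_zero_iff.mp (LinearMap.range_eq_bot.mp h))
  · exact Or.inr h

variable [DecidableEq n]

theorem exists_inverse_of_bijective_toLin' (hM : Function.Bijective (toLin' M)) :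
    ∃ S : Matrix m n ℂ, S * M = 1 ∧ M * S = 1 := by
  let e := LinearEquiv.ofBijective (toLin' M) hM
  refine ⟨LinearMap.toMatrix' e.symm.toLinearMap, toLin'.injective ?_, toLin'.injective ?_⟩
  · rw [toLin'_mul, toLin'_toMatrix', toLin'_one]
    exact LinearMap.ext e.symm_apply_apply
  · rw [toLin'_mul, toLin'_toMatrix', toLin'_one]
    exact LinearMap.ext e.apply_symm_apply

theorem eq_zero_of_intertwines_of_not_equiv (hA : IsIrreducibleFamily A)
    (hB : IsIrreducibleFamily B) (hM : ∀ a, A a * M = M * B a)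
    (hAB : ¬ ∃ (S : Matrix m n ℂ) (T : Matrix n m ℂ),
      S * T = 1 ∧ T * S = 1 ∧ ∀ a, S * A a = B a * S) :
    M = 0 := by
  obtain hM0 | hker := eq_zero_or_ker_toLin'_eq_bot hB hM
  · exact hM0
  obtain hM0 | hrange := eq_zero_or_range_toLin'_eq_top hA hM
  · exact hM0
  obtain ⟨S, hSM, hMS⟩ := exists_inverse_of_bijective_toLin'
    ⟨LinearMap.ker_eq_bot.mp hker, LinearMap.range_eq_top.mp hrange⟩
  refine absurd ⟨S, M, hSM, hMS, fun a => ?_⟩ hAB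
  calc S * A a = S * (A a * M) * S := by rw [Matrix.mul_assoc, Matrix.mul_assoc, hMS, mul_one]
    _ = B a * S := by rw [hM, ← Matrix.mul_assoc S, hSM, one_mul]

theorem exists_eq_smul_one_of_commute [Nonempty n] (hA : IsIrreducibleFamily A)
    {C : Matrix n n ℂ} (hC : ∀ a, A a * C = C * A a) : ∃ c : ℂ, C = c • 1 := by
  obtain ⟨c, hc⟩ := Module.End.exists_eigenvalue (toLin' C)
  obtain ⟨v, hv⟩ := hc.exists_hasEigenvector
  refine ⟨c, sub_eq_zero.mp ?_⟩
  have hcomm : ∀ a, A a * (C - c • 1) = (C - c • 1) * A a := fun a => by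
    rw [Matrix.mul_sub, Matrix.sub_mul, hC, Matrix.mul_smul, Matrix.smul_mul, mul_one, one_mul]
  refine (eq_zero_or_ker_toLin'_eq_bot hA hcomm).resolve_right fun hker => hv.2 ?_
  rw [← Submodule.mem_bot ℂ, ← hker, LinearMap.mem_ker, toLin'_apply, sub_mulVec,
    smul_mulVec, one_mulVec, ← toLin'_apply, hv.apply_eq_smul, sub_self]

end Schur

section Projective

variable {G : Type*} [Group G] {μ : G → G → ℂ}
  {A : G → Matrix n n ℂ} {B : G → Matrix m m ℂ}

theorem smul_conjTranspose_eq (hμ : ∀ f g, ‖μ f g‖ = 1)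
    (hBu : ∀ f, B f ∈ unitaryGroup m ℂ) (hBm : ∀ f g, B f * B g = μ f g • B (f * g))
    (g f : G) : μ g f • (B f)ᴴ = (B (g * f))ᴴ * B g := by
  have hunit : μ g f * star (μ g f) = 1 := by
    rw [Complex.star_def, Complex.mul_conj, Complex.normSq_eq_norm_sq, hμ, one_pow,
      Complex.ofReal_one]
  have hstar : (B f)ᴴ * (B g)ᴴ = star (μ g f) • (B (g * f))ᴴ := by
    rw [← conjTranspose_mul, hBm, conjTranspose_smul]
  have hu : (B g)ᴴ * B g = 1 := mem_unitaryGroup_iff'.mp (hBu g)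
  calc μ g f • (B f)ᴴ = μ g f • ((B f)ᴴ * (B g)ᴴ * B g) := by rw [Matrix.mul_assoc, hu, mul_one]
    _ = (B (g * f))ᴴ * B g := by rw [hstar, smul_mul, smul_smul, hunit, one_smul]

variable [Fintype G]

theorem mul_sum_mul_conjTranspose (hμ : ∀ f g, ‖μ f g‖ = 1)
    (hBu : ∀ f, B f ∈ unitaryGroup m ℂ) (hAm : ∀ f g, A f * A g = μ f g • A (f * g))
    (hBm : ∀ f g, B f * B g = μ f g • B (f * g)) (X : Matrix n m ℂ) (g : G) :
    A g * ∑ f, A f * X * (B f)ᴴ = (∑ f, A f * X * (B f)ᴴ) * B g := by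
  rw [Matrix.mul_sum, Matrix.sum_mul]
  refine Fintype.sum_equiv (Equiv.mulLeft g) _ _ fun f => ?_
  calc A g * (A f * X * (B f)ᴴ) = μ g f • (A (g * f) * X * (B f)ᴴ) := by
        rw [← Matrix.mul_assoc, ← Matrix.mul_assoc, hAm, smul_mul, smul_mul]
    _ = A (g * f) * X * ((B (g * f))ᴴ * B g) := by
        rw [← smul_conjTranspose_eq hμ hBu hBm, Matrix.mul_smul]
    _ = A (g * f) * X * (B (g * f))ᴴ * B g := by simp only [Matrix.mul_assoc]

variable [DecidableEq n]

theorem mul_single_one_mul_conjTranspose_apply (A : Matrix n n ℂ) (B : Matrix m m ℂ)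
    (j k : n) (j' k' : m) :
    (A * single k k' (1 : ℂ) * Bᴴ) j j' = A j k * star (B j' k') := by
  simp [Matrix.mul_apply, Matrix.single_apply, ite_and, Finset.sum_ite_eq]

theorem sum_mul_star_eq_zero (hμ : ∀ f g, ‖μ f g‖ = 1)
    (hA : IsIrreducibleFamily A) (hB : IsIrreducibleFamily B)
    (hBu : ∀ f, B f ∈ unitaryGroup m ℂ) (hAm : ∀ f g, A f * A g = μ f g • A (f * g))
    (hBm : ∀ f g, B f * B g = μ f g • B (f * g))
    (hAB : ¬ ∃ (S : Matrix m n ℂ) (T : Matrix n m ℂ),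
      S * T = 1 ∧ T * S = 1 ∧ ∀ f, S * A f = B f * S)
    (j k : n) (j' k' : m) :
    ∑ f, A f j k * star (B f j' k') = 0 := by
  have hzero := eq_zero_of_intertwines_of_not_equiv hA hB
    (mul_sum_mul_conjTranspose hμ hBu hAm hBm (single k k' 1)) hAB
  simpa [sum_apply, mul_single_one_mul_conjTranspose_apply] using congrFun (congrFun hzero j) j'

theorem card_mul_sum_mul_star_self (hμ : ∀ f g, ‖μ f g‖ = 1)
    (hA : IsIrreducibleFamily A) (hAu : ∀ f, A f ∈ unitaryGroup n ℂ)
    (hAm : ∀ f g, A f * A g = μ f g • A (f * g)) (j k j' k' : n) :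
    (Fintype.card n : ℂ) * ∑ f, A f j k * star (A f j' k') =
      if (j, k) = (j', k') then (Fintype.card G : ℂ) else 0 := by
  have : Nonempty n := ⟨j⟩
  obtain ⟨c, hc⟩ : ∃ c : ℂ, ∑ f, A f * single k k' (1 : ℂ) * (A f)ᴴ = c • 1 :=
    exists_eq_smul_one_of_commute hA (mul_sum_mul_conjTranspose hμ hAu hAm hAm (single k k' 1))
  have htrace : ∀ f, (A f * single k k' (1 : ℂ) * (A f)ᴴ).trace = if k = k' then 1 else 0 := by
    intro f
    have hu : (A f)ᴴ * A f = 1 := mem_unitaryGroup_iff'.mp (hAu f)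
    rw [trace_mul_comm, ← Matrix.mul_assoc, hu, one_mul]
    by_cases hk : k = k' <;> simp [hk]
  have hc' : (Fintype.card n : ℂ) * c = Fintype.card G * if k = k' then 1 else 0 := by
    have := congrArg trace hc
    rw [trace_sum, Finset.sum_congr rfl fun f _ => htrace f, Finset.sum_const, Finset.card_univ,
      nsmul_eq_mul, trace_smul, trace_one, smul_eq_mul] at this
    rw [mul_comm, ← this]
  have hentry : ∑ f, A f j k * star (A f j' k') = c * if j = j' then 1 else 0 := by
    simpa [sum_apply, mul_single_one_mul_conjTranspose_apply, one_apply] using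
      congrFun (congrFun hc j) j'
  rw [hentry, ← mul_assoc, hc']
  by_cases hj : j = j' <;> by_cases hk : k = k' <;> simp [hj, hk]

end Projective

theorem mul_conjTranspose_eq_one_of_orthogonal {κ ι : Type*} [Fintype ι] [DecidableEq κ]
    {P E : Matrix κ ι ℂ} {c : κ → ℝ} (hc : ∀ K, 0 ≤ c K)
    (hP : ∀ K f, P K f = (√(c K) : ℂ) * E K f)
    (horth : ∀ K K', (c K : ℂ) * ∑ f, E K f * star (E K' f) = if K = K' then 1 else 0) :
    P * Pᴴ = 1 := by
  ext K K'
  have hentry : (P * Pᴴ) K K' =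
      (√(c K) : ℂ) * (√(c K') : ℂ) * ∑ f, E K f * star (E K' f) := by
    rw [mul_apply, Finset.mul_sum]
    refine Finset.sum_congr rfl fun f _ => ?_
    rw [conjTranspose_apply, hP, hP, star_mul', Complex.star_def, Complex.conj_ofReal]
    ring
  have hKK' := horth K K'
  rw [hentry, one_apply]
  split_ifs at hKK' ⊢ with hK
  · subst hK
    rw [← Complex.ofReal_mul, Real.mul_self_sqrt (hc K), hKK']
  · rcases mul_eq_zero.mp hKK' with hcK | hsum
    · rw [Complex.ofReal_eq_zero.mp hcK, Real.sqrt_zero, Complex.ofReal_zero, zero_mul, zero_mul]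
    · rw [hsum, mul_zero]

end Matrix

theorem stmt_11_general {G : Type*} [Group G] [Fintype G] [DecidableEq G]
    (μ : G → G → ℂ)
    (hμabs : ∀ f g : G, ‖μ f g‖ = 1)
    {ι : Type*} [Fintype ι] [DecidableEq ι]
    (d : ι → ℕ)
    (D : (lam : ι) → G → Matrix (Fin (d lam)) (Fin (d lam)) ℂ)
    (hDu : ∀ (lam : ι) (f : G), D lam f ∈ Matrix.unitaryGroup (Fin (d lam)) ℂ)
    (hDm : ∀ (lam : ι) (f g : G), D lam f * D lam g = μ f g • D lam (f * g))
    (hirr : ∀ (lam : ι) (S : Submodule ℂ (Fin (d lam) → ℂ)),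
      (∀ (f : G), ∀ v ∈ S, (D lam f).mulVec v ∈ S) → S = ⊥ ∨ S = ⊤)
    (hineq : ∀ lam lam' : ι, lam ≠ lam' →
      ¬ ∃ (S : Matrix (Fin (d lam')) (Fin (d lam)) ℂ)
          (T : Matrix (Fin (d lam)) (Fin (d lam')) ℂ),
        S * T = 1 ∧ T * S = 1 ∧ ∀ f : G, S * D lam f = D lam' f * S)
    (hcomplete : ∑ lam : ι, (d lam) ^ 2 = Fintype.card G)
    (Dhat : Matrix (Σ lam : ι, Fin (d lam) × Fin (d lam)) G ℂ)
    (hDhat : ∀ (K : Σ lam : ι, Fin (d lam) × Fin (d lam)) (f : G),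
      Dhat K f = (Real.sqrt ((d K.1 : ℝ) / (Fintype.card G : ℝ)) : ℂ)
        * D K.1 f K.2.1 K.2.2) :
    Dhat * Dhatᴴ = 1 ∧ Dhatᴴ * Dhat = 1 := by
  have hG : (Fintype.card G : ℂ) ≠ 0 := Nat.cast_ne_zero.mpr Fintype.card_ne_zero
  have horth : ∀ K K' : Σ lam, Fin (d lam) × Fin (d lam),
      ((d K.1 / Fintype.card G : ℝ) : ℂ) *
          ∑ f, D K.1 f K.2.1 K.2.2 * star (D K'.1 f K'.2.1 K'.2.2) =
        if K = K' then 1 else 0 := by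
    rintro ⟨l, j, k⟩ ⟨l', j', k'⟩
    push_cast
    rw [div_mul_eq_mul_div, div_eq_iff hG]
    by_cases hl : l = l'
    · subst hl
      simpa using card_mul_sum_mul_star_self hμabs (hirr l) (hDu l) (hDm l) j k j' k'
    · rw [sum_mul_star_eq_zero hμabs (hirr l) (hirr l') (hDu l') (hDm l) (hDm l')
        (hineq l l' hl), mul_zero, if_neg (by simp [hl]), zero_mul]
  have hmul : Dhat * Dhatᴴ = 1 :=
    mul_conjTranspose_eq_one_of_orthogonal (fun K => by positivity) hDhat horth
  have hcard : Fintype.card (Σ lam, Fin (d lam) × Fin (d lam)) = Fintype.card G := by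
    simpa [Fintype.card_sigma, sq] using hcomplete
  exact ⟨hmul, (mul_eq_one_comm_of_equiv (Fintype.equivOfCardEq hcard)).mp hmul⟩

theorem stmt_11 {G : Type*} [Group G] [Fintype G] [DecidableEq G]
    (μ : G → G → ℂ)
    (hμabs : ∀ f g : G, ‖μ f g‖ = 1)
    (hμel : ∀ f : G, μ 1 f = 1) (hμer : ∀ f : G, μ f 1 = 1)
    (hμc : ∀ f g h : G, μ h f * μ (h * f) g = μ h (f * g) * μ f g)
    {ι : Type*} [Fintype ι] [DecidableEq ι]
    (d : ι → ℕ) (hd : ∀ lam : ι, 1 ≤ d lam)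
    (D : (lam : ι) → G → Matrix (Fin (d lam)) (Fin (d lam)) ℂ)
    (hDu : ∀ (lam : ι) (f : G), D lam f ∈ Matrix.unitaryGroup (Fin (d lam)) ℂ)
    (hDe : ∀ lam : ι, D lam 1 = 1)
    (hDm : ∀ (lam : ι) (f g : G), D lam f * D lam g = μ f g • D lam (f * g))
    (hirr : ∀ (lam : ι) (S : Submodule ℂ (Fin (d lam) → ℂ)),
      (∀ (f : G), ∀ v ∈ S, (D lam f).mulVec v ∈ S) → S = ⊥ ∨ S = ⊤)
    (hineq : ∀ lam lam' : ι, lam ≠ lam' →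
      ¬ ∃ (S : Matrix (Fin (d lam')) (Fin (d lam)) ℂ)
          (T : Matrix (Fin (d lam)) (Fin (d lam')) ℂ),
        S * T = 1 ∧ T * S = 1 ∧ ∀ f : G, S * D lam f = D lam' f * S)
    (hcomplete : ∑ lam : ι, (d lam) ^ 2 = Fintype.card G)
    (Dhat : Matrix (Σ lam : ι, Fin (d lam) × Fin (d lam)) G ℂ)
    (hDhat : ∀ (K : Σ lam : ι, Fin (d lam) × Fin (d lam)) (f : G),
      Dhat K f = (Real.sqrt ((d K.1 : ℝ) / (Fintype.card G : ℝ)) : ℂ)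
        * D K.1 f K.2.1 K.2.2) :
    Dhat * Dhatᴴ = 1 ∧ Dhatᴴ * Dhat = 1 :=
  stmt_11_general μ hμabs d D hDu hDm hirr hineq hcomplete Dhat hDhat
end

section
/- Let G be a finite group, μ : G → G → ℂ a factor system (|μ(f,g)| = 1 for all f,g; μ(e,f) = μ(f,e) = 1; and μ(h,f)μ(hf,g) = μ(h,fg)μ(f,g) for all f,g,h), A a nonempty finite index type, and U : G → Matrix A A ℂ a projective unitary representation of G with factor system μ. Let B be a nonempty finite index type and W : G → Matrix B B ℂ arbitrary. Then for every g ∈ G: Σ_{f∈G} ((U g)† · (U f)) ⊗ (μ(g, g⁻¹f) • W(g⁻¹f)) = Σ_{f∈G} (U f) ⊗ (W f). In particular the left-hand side is independent of g. -/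
open Matrix Kronecker

namespace Matrix

variable {n α : Type*} [Fintype n] [DecidableEq n] [CommRing α] [StarRing α]

theorem smul_conjTranspose_mul_eq_of_mul_eq_smul {u v w : Matrix n n α} {c : α}
    (hu : u ∈ unitaryGroup n α) (huv : u * v = c • w) : c • (uᴴ * w) = v := by
  rw [← Matrix.mul_smul, ← huv, ← Matrix.mul_assoc, ← star_eq_conjTranspose,
    mem_unitaryGroup_iff'.mp hu, Matrix.one_mul]

end Matrix

theorem stmt_14_general {G : Type*} [Group G] [Fintype G]
    (μ : G → G → ℂ)
    {A : Type*} [Fintype A] [DecidableEq A]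
    (U : G → Matrix A A ℂ)
    (hUu : ∀ f : G, U f ∈ Matrix.unitaryGroup A ℂ)
    (hUm : ∀ f g : G, U f * U g = μ f g • U (f * g))
    {B : Type*}
    (W : G → Matrix B B ℂ) :
    ∀ g : G, ∑ f : G, ((U g)ᴴ * U f) ⊗ₖ (μ g (g⁻¹ * f) • W (g⁻¹ * f))
      = ∑ f : G, (U f) ⊗ₖ (W f) := by
  intro g
  refine (Fintype.sum_equiv (Equiv.mulLeft g) _ _ fun f => ?_).symm
  rw [Equiv.coe_mulLeft, inv_mul_cancel_left, kronecker_smul, ← smul_kronecker,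
    smul_conjTranspose_mul_eq_of_mul_eq_smul (hUu g) (hUm g f)]

theorem stmt_14 {G : Type*} [Group G] [Fintype G] [DecidableEq G]
    (μ : G → G → ℂ)
    (hμabs : ∀ f g : G, ‖μ f g‖ = 1)
    (hμel : ∀ f : G, μ 1 f = 1) (hμer : ∀ f : G, μ f 1 = 1)
    (hμc : ∀ f g h : G, μ h f * μ (h * f) g = μ h (f * g) * μ f g)
    {A : Type*} [Fintype A] [DecidableEq A] [Nonempty A]
    (U : G → Matrix A A ℂ)
    (hUu : ∀ f : G, U f ∈ Matrix.unitaryGroup A ℂ)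
    (hUe : U 1 = 1)
    (hUm : ∀ f g : G, U f * U g = μ f g • U (f * g))
    {B : Type*} [Fintype B] [DecidableEq B] [Nonempty B]
    (W : G → Matrix B B ℂ) :
    ∀ g : G, ∑ f : G, ((U g)ᴴ * U f) ⊗ₖ (μ g (g⁻¹ * f) • W (g⁻¹ * f))
      = ∑ f : G, (U f) ⊗ₖ (W f) :=
  stmt_14_general μ U hUu hUm W
end

section
/- Let G be a finite group, γ : G → G → ℂ a factor system (|γ(f,g)| = 1 for all f,g; γ(e,f) = γ(f,e) = 1; and γ(h,f)γ(hf,g) = γ(h,fg)γ(f,g) for all f,g,h), and c : G → ℂ. Define R' : G → Matrix G G ℂ by R'(f)(g,k) = γ(g,f) if k = g·f and 0 otherwise, and set C := Σ_{f∈G} c(f) • R'(f), so that C(g,f) = γ(g, g⁻¹f) c(g⁻¹f). Then C is unitary if and only if for every g ∈ G, Σ_{f∈G} conj(γ(f,g)) · conj(c(f)) · c(fg) = (if g = e then 1 else 0). -/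
open Matrix

/-!
Writing `C = ∑ f, c f • R' f` entrywise as `C a k = γ(a, a⁻¹k) c(a⁻¹k)`, the cocycle identity together
with `|γ| = 1` shows that `Cᴴ C` is the matrix of the same shape built from the twisted
autocorrelation `D g = ∑ f, conj γ(f,g) conj c(f) c(fg)` in place of `c`. Since `γ` never vanishes,
`c ↦ C` is injective, and `δ₁` is sent to the identity because `γ(a, 1) = 1`; so `Cᴴ C = 1` exactly
when `D = δ₁`.
-/

namespace TwistedCirculant

variable {G : Type*} [Group G]

def twistedCirculant (γ : G → G → ℂ) (c : G → ℂ) : Matrix G G ℂ :=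
  Matrix.of fun a k => γ a (a⁻¹ * k) * c (a⁻¹ * k)

def twistedCorrelation [Fintype G] (γ : G → G → ℂ) (c : G → ℂ) (g : G) : ℂ :=
  ∑ f : G, star (γ f g) * star (c f) * c (f * g)

lemma sum_smul_eq_twistedCirculant [Fintype G] [DecidableEq G] {γ : G → G → ℂ} (c : G → ℂ)
    {R' : G → Matrix G G ℂ} (hR' : ∀ f g k : G, R' f g k = if k = g * f then γ g f else 0) :
    ∑ f : G, c f • R' f = twistedCirculant γ c := by
  ext a k
  rw [Matrix.sum_apply, Finset.sum_eq_single (a⁻¹ * k)]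
  · simp [twistedCirculant, hR', mul_comm]
  · intro f _ hf
    have hk : k ≠ a * f := fun h => hf (by rw [h, inv_mul_cancel_left])
    simp [hR', hk]
  · simp

lemma twistedCirculant_injective {γ : G → G → ℂ} (hγ : ∀ g : G, γ 1 g ≠ 0) :
    Function.Injective (twistedCirculant γ) := by
  intro c d hcd
  funext g
  have h := congrFun (congrFun hcd 1) g
  simpa [twistedCirculant, hγ g] using h

lemma twistedCirculant_single_one [DecidableEq G] {γ : G → G → ℂ} (hγ : ∀ f : G, γ f 1 = 1) :
    twistedCirculant γ (Pi.single 1 1) = 1 := by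
  ext a k
  by_cases hak : a = k
  · subst hak
    simp [twistedCirculant, hγ]
  · have : a⁻¹ * k ≠ 1 := by rwa [Ne, inv_mul_eq_one]
    simp [twistedCirculant, Pi.single_apply, this, hak]

lemma star_mul_self_of_norm_eq_one {z : ℂ} (hz : ‖z‖ = 1) : star z * z = 1 := by
  rw [Complex.star_def, Complex.conj_mul', hz]
  norm_num

lemma star_mul_eq_mul_star_of_cocycle {γ : G → G → ℂ} (hγabs : ∀ f g : G, ‖γ f g‖ = 1)
    (hγc : ∀ f g h : G, γ h f * γ (h * f) g = γ h (f * g) * γ f g) (h f g : G) :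
    star (γ h f) * γ h (f * g) = γ (h * f) g * star (γ f g) := by
  have e₁ := star_mul_self_of_norm_eq_one (hγabs h f)
  have e₂ := star_mul_self_of_norm_eq_one (hγabs f g)
  linear_combination star (γ h f) * star (γ f g) * (hγc f g h).symm
    - star (γ h f) * γ h (f * g) * e₂ + γ (h * f) g * star (γ f g) * e₁

lemma star_twistedCirculant_mul_self [Fintype G] {γ : G → G → ℂ} (hγabs : ∀ f g : G, ‖γ f g‖ = 1)
    (hγc : ∀ f g h : G, γ h f * γ (h * f) g = γ h (f * g) * γ f g) (c : G → ℂ) :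
    star (twistedCirculant γ c) * twistedCirculant γ c =
      twistedCirculant γ (twistedCorrelation γ c) := by
  ext a b
  simp only [mul_apply, star_apply, twistedCirculant, twistedCorrelation, of_apply, Finset.mul_sum]
  -- sum over the middle index `j = a f⁻¹`
  refine Fintype.sum_equiv ((Equiv.inv G).trans (Equiv.mulRight a)) _ _ fun j => ?_
  have hfg : j⁻¹ * b = j⁻¹ * a * (a⁻¹ * b) := by group
  have phase := star_mul_eq_mul_star_of_cocycle hγabs hγc j (j⁻¹ * a) (a⁻¹ * b)
  rw [mul_inv_cancel_left] at phase
  simp only [Equiv.trans_apply, Equiv.inv_apply, Equiv.coe_mulRight, star_mul', hfg]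
  linear_combination star (c (j⁻¹ * a)) * c (j⁻¹ * a * (a⁻¹ * b)) * phase

end TwistedCirculant

open TwistedCirculant in
theorem stmt_15_general {G : Type*} [Group G] [Fintype G] [DecidableEq G]
    (γ : G → G → ℂ)
    (hγabs : ∀ f g : G, ‖γ f g‖ = 1)
    (hγer : ∀ f : G, γ f 1 = 1)
    (hγc : ∀ f g h : G, γ h f * γ (h * f) g = γ h (f * g) * γ f g)
    (c : G → ℂ)
    (R' : G → Matrix G G ℂ)
    (hR' : ∀ f g k : G, R' f g k = if k = g * f then γ g f else 0) :
    (∑ f : G, c f • R' f) ∈ Matrix.unitaryGroup G ℂ ↔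
      ∀ g : G, ∑ f : G, star (γ f g) * star (c f) * c (f * g)
        = if g = 1 then 1 else 0 := by
  have hγ : ∀ g : G, γ 1 g ≠ 0 := fun g h => by simpa [h] using hγabs 1 g
  rw [sum_smul_eq_twistedCirculant c hR', mem_unitaryGroup_iff',
    star_twistedCirculant_mul_self hγabs hγc, ← twistedCirculant_single_one hγer,
    (twistedCirculant_injective hγ).eq_iff, funext_iff]
  simp only [twistedCorrelation, Pi.single_apply]

theorem stmt_15 {G : Type*} [Group G] [Fintype G] [DecidableEq G]
    (γ : G → G → ℂ)
    (hγabs : ∀ f g : G, ‖γ f g‖ = 1)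
    (hγel : ∀ f : G, γ 1 f = 1) (hγer : ∀ f : G, γ f 1 = 1)
    (hγc : ∀ f g h : G, γ h f * γ (h * f) g = γ h (f * g) * γ f g)
    (c : G → ℂ)
    (R' : G → Matrix G G ℂ)
    (hR' : ∀ f g k : G, R' f g k = if k = g * f then γ g f else 0) :
    (∑ f : G, c f • R' f) ∈ Matrix.unitaryGroup G ℂ ↔
      ∀ g : G, ∑ f : G, star (γ f g) * star (c f) * c (f * g)
        = if g = 1 then 1 else 0 :=
  stmt_15_general γ hγabs hγer hγc c R' hR'
end

section
/- Let G be a finite group, and let μ, ν : G → G → ℂ be factor systems (each with all values of modulus 1, value 1 whenever one argument is e, and satisfying the cocycle identity). Let A, B be nonempty finite index types, U : G → Matrix A A ℂ a projective unitary representation of G with factor system μ, and V : G → Matrix B B ℂ a projective unitary representation of G with factor system ν. Suppose the family (U f ⊗ V f)_{f∈G} of Kronecker products is linearly independent, and that for some c : G → ℂ the matrix 𝒰 := Σ_{f∈G} c(f) • ((U f) ⊗ (V f)) is unitary. Then for every g ∈ G, Σ_{f∈G} conj(μ(f,g)·ν(f,g)) · conj(c(f)) · c(fg) = (if g = e then 1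 else 0). -/
/-!
`W f = U f ⊗ V f` is again a projective unitary representation, with factor system `γ = μ ν`.
Multiplying `W f * W g = γ(f, g) • W (f g)` on the left by `(W f)ᴴ` and using `|γ| = 1` gives
`(W f)ᴴ * W (f g) = conj γ(f, g) • W g`, so expanding `𝒰ᴴ 𝒰` and reindexing by `h = f g` writes
it as `∑_g (∑_f conj γ(f, g) conj (c f) c (f g)) • W g`. Unitarity says this equals `1 = W 1`,
and linear independence of the `W g` lets us compare coefficients.
-/

open Matrix Kronecker

section

variable {G 𝕜 n m : Type*} [Group G] [RCLike 𝕜]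
  [Fintype n] [DecidableEq n] [Fintype m] [DecidableEq m]

structure IsProjectiveUnitaryRep_s17 (W : G → Matrix n n 𝕜) (γ : G → G → 𝕜) : Prop where
  mem_unitaryGroup : ∀ f, W f ∈ unitaryGroup n 𝕜
  map_one : W 1 = 1
  map_mul : ∀ f g, W f * W g = γ f g • W (f * g)

namespace IsProjectiveUnitaryRep_s17

variable {W : G → Matrix n n 𝕜} {γ : G → G → 𝕜}

theorem kronecker {U : G → Matrix n n 𝕜} {V : G → Matrix m m 𝕜} {μ ν : G → G → 𝕜}
    (hU : IsProjectiveUnitaryRep_s17 U μ) (hV : IsProjectiveUnitaryRep_s17 V ν) :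
    IsProjectiveUnitaryRep_s17 (fun f => U f ⊗ₖ V f) (fun f g => μ f g * ν f g) where
  mem_unitaryGroup f := kronecker_mem_unitary (hU.mem_unitaryGroup f) (hV.mem_unitaryGroup f)
  map_one := by simp only [hU.map_one, hV.map_one, one_kronecker_one]
  map_mul f g := by
    rw [← mul_kronecker_mul, hU.map_mul, hV.map_mul, smul_kronecker, kronecker_smul, smul_smul]

theorem conjTranspose_mul_mul (hW : IsProjectiveUnitaryRep_s17 W γ) {f g : G} (hγ : ‖γ f g‖ = 1) :
    (W f)ᴴ * W (f * g) = star (γ f g) • W g := by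
  have hstar : star (γ f g) * γ f g = 1 := by
    rw [RCLike.star_def, RCLike.conj_mul, hγ, RCLike.ofReal_one, one_pow]
  have hWf : (W f)ᴴ * W f = 1 := mem_unitaryGroup_iff'.mp (hW.mem_unitaryGroup f)
  calc (W f)ᴴ * W (f * g) = star (γ f g) • ((W f)ᴴ * (γ f g • W (f * g))) := by
        rw [Matrix.mul_smul, smul_smul, hstar, one_smul]
    _ = star (γ f g) • W g := by rw [← hW.map_mul, ← mul_assoc, hWf, one_mul]

variable [Fintype G]

theorem star_sum_mul_sum (hW : IsProjectiveUnitaryRep_s17 W γ) (hγ : ∀ f g, ‖γ f g‖ = 1)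
    (c : G → 𝕜) :
    star (∑ f, c f • W f) * ∑ f, c f • W f
      = ∑ g, (∑ f, star (γ f g) * star (c f) * c (f * g)) • W g := by
  have hrow (f : G) : ∑ h, (star (c f) • (W f)ᴴ) * (c h • W h)
      = ∑ g, (star (γ f g) * star (c f) * c (f * g)) • W g := by
    rw [← Equiv.sum_comp (Equiv.mulLeft f)]
    refine Finset.sum_congr rfl fun g _ => ?_
    simp only [Equiv.coe_mulLeft]
    rw [Matrix.smul_mul, Matrix.mul_smul, hW.conjTranspose_mul_mul (hγ f g), smul_smul,
      smul_smul]
    ring_nf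
  simp only [star_eq_conjTranspose, conjTranspose_sum, conjTranspose_smul, Finset.sum_mul_sum,
    hrow]
  rw [Finset.sum_comm]
  simp only [Finset.sum_smul]

theorem orthogonality (hW : IsProjectiveUnitaryRep_s17 W γ) (hγ : ∀ f g, ‖γ f g‖ = 1)
    (hli : LinearIndependent 𝕜 W) {c : G → 𝕜} (hc : ∑ f, c f • W f ∈ unitaryGroup n 𝕜)
    [DecidableEq G] (g : G) :
    ∑ f, star (γ f g) * star (c f) * c (f * g) = if g = 1 then 1 else 0 := by
  have hdelta : ∑ g : G, (if g = 1 then (1 : 𝕜) else 0) • W g = 1 := by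
    simp only [ite_smul, one_smul, zero_smul, Finset.sum_ite_eq', Finset.mem_univ, if_true,
      hW.map_one]
  have hcoeff : ∑ g, (∑ f, star (γ f g) * star (c f) * c (f * g)) • W g
      = ∑ g : G, (if g = 1 then (1 : 𝕜) else 0) • W g := by
    rw [← hW.star_sum_mul_sum hγ, hdelta, Unitary.star_mul_self_of_mem hc]
  refine sub_eq_zero.mp <| Fintype.linearIndependent_iff.mp hli
    (fun g => ∑ f, star (γ f g) * star (c f) * c (f * g) - if g = 1 then 1 else 0) ?_ g
  simp only [sub_smul, Finset.sum_sub_distrib, hcoeff, sub_self]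

end IsProjectiveUnitaryRep_s17

end

theorem stmt_17_general {G : Type*} [Group G] [Fintype G] [DecidableEq G]
    (μ ν : G → G → ℂ)
    (hμabs : ∀ f g : G, ‖μ f g‖ = 1)
    (hνabs : ∀ f g : G, ‖ν f g‖ = 1)
    {A B : Type*} [Fintype A] [DecidableEq A]
    [Fintype B] [DecidableEq B]
    (U : G → Matrix A A ℂ)
    (hUu : ∀ f : G, U f ∈ Matrix.unitaryGroup A ℂ)
    (hUe : U 1 = 1)
    (hUm : ∀ f g : G, U f * U g = μ f g • U (f * g))
    (V : G → Matrix B B ℂ)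
    (hVu : ∀ f : G, V f ∈ Matrix.unitaryGroup B ℂ)
    (hVe : V 1 = 1)
    (hVm : ∀ f g : G, V f * V g = ν f g • V (f * g))
    (hli : LinearIndependent ℂ (fun f : G => (U f) ⊗ₖ (V f)))
    (c : G → ℂ)
    (h𝒰 : (∑ f : G, c f • ((U f) ⊗ₖ (V f))) ∈ Matrix.unitaryGroup (A × B) ℂ) :
    ∀ g : G, ∑ f : G, star (μ f g * ν f g) * star (c f) * c (f * g)
      = if g = 1 then 1 else 0 := by
  have hU : IsProjectiveUnitaryRep_s17 U μ := ⟨hUu, hUe, hUm⟩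
  have hV : IsProjectiveUnitaryRep_s17 V ν := ⟨hVu, hVe, hVm⟩
  have hγ (f g : G) : ‖μ f g * ν f g‖ = 1 := by rw [norm_mul, hμabs, hνabs, one_mul]
  exact (hU.kronecker hV).orthogonality hγ hli h𝒰

theorem stmt_17 {G : Type*} [Group G] [Fintype G] [DecidableEq G]
    (μ ν : G → G → ℂ)
    (hμabs : ∀ f g : G, ‖μ f g‖ = 1)
    (hμel : ∀ f : G, μ 1 f = 1) (hμer : ∀ f : G, μ f 1 = 1)
    (hμc : ∀ f g h : G, μ h f * μ (h * f) g = μ h (f * g) * μ f g)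
    (hνabs : ∀ f g : G, ‖ν f g‖ = 1)
    (hνel : ∀ f : G, ν 1 f = 1) (hνer : ∀ f : G, ν f 1 = 1)
    (hνc : ∀ f g h : G, ν h f * ν (h * f) g = ν h (f * g) * ν f g)
    {A B : Type*} [Fintype A] [DecidableEq A] [Nonempty A]
    [Fintype B] [DecidableEq B] [Nonempty B]
    (U : G → Matrix A A ℂ)
    (hUu : ∀ f : G, U f ∈ Matrix.unitaryGroup A ℂ)
    (hUe : U 1 = 1)
    (hUm : ∀ f g : G, U f * U g = μ f g • U (f * g))
    (V : G → Matrix B B ℂ)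
    (hVu : ∀ f : G, V f ∈ Matrix.unitaryGroup B ℂ)
    (hVe : V 1 = 1)
    (hVm : ∀ f g : G, V f * V g = ν f g • V (f * g))
    (hli : LinearIndependent ℂ (fun f : G => (U f) ⊗ₖ (V f)))
    (c : G → ℂ)
    (h𝒰 : (∑ f : G, c f • ((U f) ⊗ₖ (V f))) ∈ Matrix.unitaryGroup (A × B) ℂ) :
    ∀ g : G, ∑ f : G, star (μ f g * ν f g) * star (c f) * c (f * g)
      = if g = 1 then 1 else 0 :=
  stmt_17_general μ ν hμabs hνabs U hUu hUe hUm V hVu hVe hVm hli c h𝒰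
end
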